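/- arXiv:2509.13463 — 6 statements merged into one kernel-verified Lean document; each statement's English description precedes it below -/
import Mathlib

section
/- Let r ≥ 1 be an integer and let a ∈ ℝ^{r+1} be a nonzero vector with Σ_{i=1}^{r+1} a_i = 0. Let C(a) = [D_{r+1} | a] be the (r+1) × (binom(r+1,2)+1) real matrix whose columns are the columns of D_{r+1} together with a. Then the maximum of |det(B)| over all r×r submatrices B of C(a) equals max{1, max_{S ⊆ [r+1]} Σ_{i∈S} a_i} (the inner maximum over subsets S is nonnegative, being attained for instance at the set of indices where a is positive, and at S = ∅ it is 0). -/
/-- The index set for the columns of `D_r`: pairs `(i, j)` with `i < j`. -/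
abbrev PairIdx (r : ℕ) := {p : Fin r × Fin r // p.1 < p.2}

/-- The real matrix `D_r` whose columns are `e_i - e_j` for `i < j`. -/
def DmatR (r : ℕ) : Matrix (Fin r) (PairIdx r) ℝ :=
  Matrix.of fun i p => if i = p.val.1 then 1 else if i = p.val.2 then -1 else 0

/-- The matrix `C(a) = [D_{r+1} | a]`. -/
def Cmat {r : ℕ} (a : Fin (r + 1) → ℝ) :
    Matrix (Fin (r + 1)) (PairIdx (r + 1) ⊕ Unit) ℝ :=
  Matrix.of fun i => Sum.elim (fun p => DmatR (r + 1) i p) (fun _ => a i)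


open Matrix

namespace ExtraColAux

/-- indicator column of an optional index -/
def ind {n : ℕ} (p : Option (Fin n)) : Fin n → ℝ :=
  fun k => match p with
  | none => 0
  | some i => if k = i then 1 else 0

/-- optional preimage under an injective map -/
noncomputable def pb {n N : ℕ} (g : Fin n → Fin N) (m : Fin N) : Option (Fin n) :=
  if h : ∃ k, g k = m then some h.choose else none

lemma ind_pb {n N : ℕ} (g : Fin n → Fin N) (hg : Function.Injective g) (m : Fin N)
    (k : Fin n) : ind (pb g m) k = if g k = m then 1 else 0 := by
  by_cases h : ∃ k, g k = m
  · have h1 : g h.choose = m := h.choose_spec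
    rw [pb, dif_pos h]
    show (if k = h.choose then (1:ℝ) else 0) = _
    by_cases hk : g k = m
    · rw [if_pos (hg (hk.trans h1.symm)), if_pos hk]
    · rw [if_neg (fun he => hk (by rw [he]; exact h1)), if_neg hk]
  · rw [pb, dif_neg h, if_neg (fun he => h ⟨k, he⟩)]
    rfl

/-- the edge-like columns: `±(ind p - ind q)` -/
def EdgeCol {n : ℕ} (c : Fin n → ℝ) : Prop :=
  ∃ ε p q, (ε = (1:ℝ) ∨ ε = -1) ∧ ∀ k, c k = ε * (ind p k - ind q k)

lemma edge_congr {n : ℕ} {c c' : Fin n → ℝ} (h : ∀ k, c k = c' k) (h' : EdgeCol c') :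
    EdgeCol c := by
  obtain ⟨ε, p, q, hε, he⟩ := h'
  exact ⟨ε, p, q, hε, fun k => (h k).trans (he k)⟩

def BCol {r n : ℕ} (a : Fin (r+1) → ℝ) (P : Fin n → Finset (Fin (r+1)))
    (c : Fin n → ℝ) : Prop :=
  ∀ i, c i = ∑ t ∈ P i, a t

def Good {r n : ℕ} (a : Fin (r+1) → ℝ) (B : Matrix (Fin n) (Fin n) ℝ) : Prop :=
  (∀ j, EdgeCol (fun i => B i j)) ∨
  ∃ P : Fin n → Finset (Fin (r+1)), (∀ i i', i ≠ i' → Disjoint (P i) (P i')) ∧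
    ∃ jb, BCol a P (fun i => B i jb) ∧ ∀ j, j ≠ jb → EdgeCol (fun i => B i j)

/-- column operations: adding multiples of column `p` to the other columns -/
lemma det_colops {n : ℕ} (B : Matrix (Fin n) (Fin n) ℝ) (p : Fin n) (c : Fin n → ℝ)
    (hc : c p = 0) :
    det (Matrix.of fun i j => B i j + c j * B i p) = det B := by
  have h := Matrix.det_eq_of_forall_row_eq_smul_add_const
      (A := (Matrix.of fun i j => B i j + c j * B i p)ᵀ) (B := Bᵀ) c p hc
      (fun i j => rfl)
  rwa [Matrix.det_transpose, Matrix.det_transpose] at h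

lemma abs_eq_one_of_mul_self {η : ℝ} (h : η * η = 1) : |η| = 1 := by
  rcases mul_self_eq_one_iff.mp h with h1 | h1 <;> rw [h1] <;> norm_num

/-- pivoting at `(i0, j1)` when the pivot entry is `±1` -/
lemma pivot_abs_det {n : ℕ} (B : Matrix (Fin (n+1)) (Fin (n+1)) ℝ) (i0 j1 : Fin (n+1))
    (hη : B i0 j1 * B i0 j1 = 1) :
    |det B| = |det (Matrix.of fun (i : Fin n) (j : Fin n) =>
      B (i0.succAbove i) (j1.succAbove j)
        - B i0 j1 * B i0 (j1.succAbove j) * B (i0.succAbove i) j1)| := by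
  set c : Fin (n+1) → ℝ := fun j => if j = j1 then 0 else -(B i0 j1 * B i0 j) with hcdef
  set B' := Matrix.of fun i j => B i j + c j * B i j1 with hB'
  have hdet : det B' = det B := det_colops B j1 c (by simp [hcdef])
  have hrow : ∀ j, j ≠ j1 → B' i0 j = 0 := by
    intro j hj
    show B i0 j + c j * B i0 j1 = 0
    rw [hcdef]
    simp only [if_neg hj]
    linear_combination (-(B i0 j)) * hη
  have hpivot : B' i0 j1 = B i0 j1 := by
    show B i0 j1 + c j1 * B i0 j1 = B i0 j1
    simp [hcdef]
  have hexp : det B' = (-1 : ℝ)^(i0 + j1 : ℕ) * B i0 j1 *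
      det (B'.submatrix i0.succAbove j1.succAbove) := by
    rw [Matrix.det_succ_row B' i0, Finset.sum_eq_single j1]
    · rw [hpivot]
    · intro j _ hjne
      rw [hrow j hjne]; ring
    · simp
  have hsub : B'.submatrix i0.succAbove j1.succAbove = Matrix.of fun (i : Fin n) (j : Fin n) =>
      B (i0.succAbove i) (j1.succAbove j)
        - B i0 j1 * B i0 (j1.succAbove j) * B (i0.succAbove i) j1 := by
    ext i j
    show B (i0.succAbove i) (j1.succAbove j) + c (j1.succAbove j) * B (i0.succAbove i) j1 = _
    rw [hcdef]
    simp only [if_neg (Fin.succAbove_ne j1 j), Matrix.of_apply]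
    ring
  rw [← hdet, hexp, hsub, abs_mul, abs_mul, abs_pow, abs_neg, abs_one, one_pow, one_mul,
    abs_eq_one_of_mul_self hη, one_mul]


lemma ind_bind {n : ℕ} (ρ : Fin n → Fin (n+1)) (hρ : Function.Injective ρ)
    (q : Option (Fin (n+1))) (k : Fin n) :
    ind (q.bind fun m => pb ρ m) k = ind q (ρ k) := by
  cases q with
  | none => rfl
  | some m => exact (ind_pb ρ hρ m k).trans rfl

lemma ind_pull {n : ℕ} (i0 : Fin (n+1)) (Q : Option (Fin n)) (P : Option (Fin (n+1)))
    (k : Fin n) :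
    ind P (i0.succAbove k) + ind P i0 * ind Q k
      = ind (P.bind fun m => if m = i0 then Q else pb i0.succAbove m) k := by
  cases P with
  | none => show (0:ℝ) + 0 * _ = 0; ring
  | some m =>
    by_cases hm : m = i0
    · show (if i0.succAbove k = m then (1:ℝ) else 0)
          + (if i0 = m then (1:ℝ) else 0) * ind Q k
          = ind (if m = i0 then Q else pb i0.succAbove m) k
      rw [if_pos hm, if_pos hm.symm,
        if_neg (fun h : i0.succAbove k = m => Fin.succAbove_ne i0 k (h.trans hm))]
      ring
    · have e1 : (if i0.succAbove k = m then (1:ℝ) else 0) = ind (pb i0.succAbove m) k :=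
        (ind_pb _ Fin.succAbove_right_injective m k).symm
      show (if i0.succAbove k = m then (1:ℝ) else 0)
          + (if i0 = m then (1:ℝ) else 0) * ind Q k
          = ind (if m = i0 then Q else pb i0.succAbove m) k
      rw [if_neg hm, if_neg (fun h : i0 = m => hm h.symm), e1]
      ring

lemma edge_pull {n : ℕ} (i0 : Fin (n+1)) (Q : Option (Fin n)) (u : Fin (n+1) → ℝ)
    (hu : EdgeCol u) : EdgeCol (fun k => u (i0.succAbove k) + u i0 * ind Q k) := by
  obtain ⟨ε, p, q, hε, he⟩ := hu
  refine ⟨ε, p.bind fun m => if m = i0 then Q else pb i0.succAbove m,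
           q.bind fun m => if m = i0 then Q else pb i0.succAbove m, hε, fun k => ?_⟩
  show u (i0.succAbove k) + u i0 * ind Q k = _
  rw [he, he]
  linear_combination ε * ind_pull i0 Q p k - ε * ind_pull i0 Q q k

lemma pivot_main {n : ℕ} (B : Matrix (Fin (n+1)) (Fin (n+1)) ℝ)
    (j1 : Fin (n+1)) (ε : ℝ) (p q : Option (Fin (n+1))) (hε : ε = 1 ∨ ε = -1)
    (hpq : p ≠ q) (he : ∀ k, B k j1 = ε * (ind p k - ind q k)) :
    ∃ (C : Matrix (Fin n) (Fin n) ℝ) (τ : Fin n → Fin (n+1)), Function.Injective τ ∧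
      (∀ jb, jb ≠ j1 → ∃ jB, τ jB = jb) ∧ |B.det| = |C.det| ∧
      ∃ (i0 : Fin (n+1)) (Q : Option (Fin n)),
        ∀ j k, C k j = B (i0.succAbove k) (τ j) + B i0 (τ j) * ind Q k := by
  have hε2 : ε * ε = 1 := by rcases hε with h | h <;> rw [h] <;> norm_num
  obtain ⟨i0, Q, hη, hQ⟩ : ∃ (i0 : Fin (n+1)) (Q : Option (Fin n)),
      B i0 j1 * B i0 j1 = 1 ∧
      ∀ k : Fin n, -(B i0 j1 * B (i0.succAbove k) j1) = ind Q k := by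
    cases p with
    | some m =>
      have hqm : ind q m = 0 := by
        cases q with
        | none => rfl
        | some m' =>
          have hne : m ≠ m' := fun h => hpq (by rw [h])
          exact if_neg hne
      have h1 : B m j1 = ε := by
        rw [he m, hqm]
        show ε * ((if m = m then (1:ℝ) else 0) - 0) = ε
        rw [if_pos rfl]; ring
      refine ⟨m, q.bind fun m' => pb m.succAbove m', by rw [h1]; exact hε2, fun k => ?_⟩
      rw [ind_bind _ Fin.succAbove_right_injective q k, h1, he (m.succAbove k)]
      have hp0 : ind (some m) (m.succAbove k) = 0 := if_neg (Fin.succAbove_ne m k)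
      rw [hp0]
      linear_combination (ind q (m.succAbove k)) * hε2
    | none =>
      cases q with
      | none => exact absurd rfl hpq
      | some m =>
        have h1 : B m j1 = -ε := by
          rw [he m]
          show ε * (0 - if m = m then (1:ℝ) else 0) = -ε
          rw [if_pos rfl]; ring
        refine ⟨m, none, by rw [h1]; linear_combination hε2, fun k => ?_⟩
        rw [h1, he (m.succAbove k)]
        have hq0 : ind (some m) (m.succAbove k) = 0 := if_neg (Fin.succAbove_ne m k)
        rw [hq0]
        show -(-ε * (ε * ((0:ℝ) - 0))) = 0
        ring
  refine ⟨Matrix.of fun i j => B (i0.succAbove i) (j1.succAbove j)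
      - B i0 j1 * B i0 (j1.succAbove j) * B (i0.succAbove i) j1,
    j1.succAbove, Fin.succAbove_right_injective,
    fun jb h => Fin.exists_succAbove_eq h,
    pivot_abs_det B i0 j1 hη, i0, Q, fun j k => ?_⟩
  show B _ _ - _ = _
  rw [← hQ k]
  ring

lemma key {r : ℕ} (a : Fin (r+1) → ℝ) (F : ℝ)
    (hF : ∀ S : Finset (Fin (r+1)), |∑ i ∈ S, a i| ≤ F) (hF1 : 1 ≤ F) :
    ∀ n (B : Matrix (Fin n) (Fin n) ℝ), Good a B → |B.det| ≤ F := by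
  intro n
  induction n with
  | zero =>
    intro B _
    rw [Matrix.det_fin_zero, abs_one]; exact hF1
  | succ n ih =>
    intro B hB
    have hdet0 : ∀ (j1 : Fin (n+1)) (ε : ℝ) (p : Option (Fin (n+1))),
        (∀ k, B k j1 = ε * (ind p k - ind p k)) → |B.det| ≤ F := by
      intro j1 ε p he
      rw [Matrix.det_eq_zero_of_column_eq_zero j1 (fun i => by rw [he i]; ring), abs_zero]
      linarith
    rcases hB with hall | ⟨P, hdisj, jb, hbc, hedge⟩
    · obtain ⟨ε, p, q, hε, he⟩ := hall 0
      by_cases hpq : p = q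
      · exact hdet0 0 ε p (by rw [hpq] at he ⊢; exact he)
      · obtain ⟨C, τ, hτinj, hτsurj, habs, i0, Q, hC⟩ := pivot_main B 0 ε p q hε hpq he
        rw [habs]
        apply ih
        left
        intro j
        exact edge_congr (fun k => hC j k) (edge_pull i0 Q _ (hall (τ j)))
    · by_cases hn : n = 0
      · subst hn
        have hjb : (0 : Fin 1) = jb := Subsingleton.elim _ _
        have h0 : B 0 jb = ∑ t ∈ P 0, a t := hbc 0
        rw [← hjb] at h0
        rw [Matrix.det_fin_one, h0]
        exact hF _
      · obtain ⟨j1, hj1⟩ := Fintype.exists_ne_of_one_lt_card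
          (by rw [Fintype.card_fin]; omega) jb
        obtain ⟨ε, p, q, hε, he⟩ := hedge j1 hj1
        by_cases hpq : p = q
        · exact hdet0 j1 ε p (by rw [hpq] at he ⊢; exact he)
        · obtain ⟨C, τ, hτinj, hτsurj, habs, i0, Q, hC⟩ := pivot_main B j1 ε p q hε hpq he
          rw [habs]
          apply ih
          right
          obtain ⟨jB, hjB⟩ := hτsurj jb hj1.symm
          refine ⟨fun k => P (i0.succAbove k) ∪ (if Q = some k then P i0 else ∅),
            ?_, jB, ?_, ?_⟩
          · intro k k' hkk'
            apply Finset.disjoint_union_left.mpr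
            constructor
            · apply Finset.disjoint_union_right.mpr
              constructor
              · exact hdisj _ _ (fun h => hkk' (Fin.succAbove_right_injective h))
              · split_ifs with h
                · exact hdisj _ _ (Fin.succAbove_ne i0 k)
                · exact Finset.disjoint_empty_right _
            · apply Finset.disjoint_union_right.mpr
              constructor
              · split_ifs with h
                · exact hdisj _ _ (Fin.ne_succAbove i0 k')
                · exact Finset.disjoint_empty_left _
              · split_ifs with h h'
                · exact absurd ((Option.some_injective _ (h.symm.trans h'))) hkk'
                · exact Finset.disjoint_empty_right _
                · exact Finset.disjoint_empty_left _
                · exact Finset.disjoint_empty_left _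
          · intro k
            show C k jB = _
            have hb1 : B (i0.succAbove k) jb = ∑ t ∈ P (i0.succAbove k), a t := hbc _
            have hb2 : B i0 jb = ∑ t ∈ P i0, a t := hbc _
            rw [hC jB k, hjB, hb1, hb2]
            show _ = ∑ t ∈ P (i0.succAbove k) ∪ (if Q = some k then P i0 else ∅), a t
            by_cases hQ : Q = some k
            · rw [if_pos hQ, Finset.sum_union (hdisj _ _ (Fin.succAbove_ne i0 k)), hQ]
              show _ + _ * (if k = k then (1:ℝ) else 0) = _
              rw [if_pos rfl]; ring
            · rw [if_neg hQ, Finset.union_empty]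
              have hz : ind Q k = 0 := by
                cases Q with
                | none => rfl
                | some m => exact if_neg (fun h => hQ (by rw [h]))
              rw [hz]; ring
          · intro j hj
            have hτjb : τ j ≠ jb := fun h => hj (hτinj (h.trans hjB.symm))
            exact edge_congr (fun k => hC j k) (edge_pull i0 Q _ (hedge (τ j) hτjb))

lemma det_updateCol_add_sum {n : ℕ} (B : Matrix (Fin n) (Fin n) ℝ) (p : Fin n)
    (c : Fin n → ℝ) (s : Finset (Fin n)) (hp : p ∉ s) :
    det (B.updateCol p (fun i => B i p + ∑ j ∈ s, c j * B i j)) = det B := by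
  induction s using Finset.induction_on with
  | empty =>
    have h0 : B.updateCol p
        (fun i => B i p + ∑ j ∈ (∅ : Finset (Fin n)), c j * B i j) = B := by
      ext i j
      rw [Matrix.updateCol_apply]
      split_ifs with h
      · subst h; simp
      · rfl
    rw [h0]
  | @insert j s hj ihs =>
    have hps : p ∉ s := fun h => hp (Finset.mem_insert_of_mem h)
    have hpj : p ≠ j := fun h => hp (h ▸ Finset.mem_insert_self j s)
    set Ms := B.updateCol p (fun i => B i p + ∑ j' ∈ s, c j' * B i j') with hMs
    have key0 : B.updateCol p (fun i => B i p + ∑ j' ∈ insert j s, c j' * B i j')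
        = Ms.updateCol p (fun k => Ms k p + c j • Ms k j) := by
      ext i j'
      by_cases h : j' = p
      · subst h
        have hjj : (j = j') = False := eq_false (fun hh => hpj hh.symm)
        simp only [hMs, Matrix.updateCol_apply, eq_self_iff_true, if_true, hjj,
          if_false, Finset.sum_insert hj, smul_eq_mul]
        ring
      · simp only [hMs, Matrix.updateCol_apply, if_neg h]
    rw [key0, Matrix.det_updateCol_add_smul_self Ms hpj (c j), ihs hps]

def mkp {N : ℕ} (x y : Fin N) (h : x ≠ y) : PairIdx N :=
  if hlt : x < y then ⟨(x, y), hlt⟩ else ⟨(y, x), lt_of_le_of_ne (not_lt.mp hlt) (Ne.symm h)⟩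

lemma mkp_val {N : ℕ} (x y : Fin N) (h : x ≠ y) :
    (mkp x y h).val = (x, y) ∨ (mkp x y h).val = (y, x) := by
  unfold mkp
  split_ifs with hlt
  · exact Or.inl rfl
  · exact Or.inr rfl

lemma cmat_mkp {r : ℕ} (a : Fin (r+1) → ℝ) (x y : Fin (r+1)) (h : x ≠ y)
    (i : Fin (r+1)) :
    Cmat a i (Sum.inl (mkp x y h)) = (if x < y then 1 else -1) *
      ((if i = x then (1:ℝ) else 0) - (if i = y then 1 else 0)) := by
  by_cases hlt : x < y
  · rw [if_pos hlt]
    show DmatR (r+1) i (mkp x y h) = _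
    unfold mkp
    rw [dif_pos hlt]
    show (if i = x then (1:ℝ) else if i = y then -1 else 0) = _
    by_cases h1 : i = x
    · rw [if_pos h1, if_pos h1, if_neg (fun h2 => h (h1.symm.trans h2))]; ring
    · rw [if_neg h1, if_neg h1]
      by_cases h2 : i = y
      · rw [if_pos h2, if_pos h2]; ring
      · rw [if_neg h2, if_neg h2]; ring
  · rw [if_neg hlt]
    show DmatR (r+1) i (mkp x y h) = _
    unfold mkp
    rw [dif_neg hlt]
    show (if i = y then (1:ℝ) else if i = x then -1 else 0) = _
    by_cases h2 : i = y
    · rw [if_pos h2, if_pos h2, if_neg (fun h1 => h (h1.symm.trans h2))]; ring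
    · rw [if_neg h2, if_neg h2]
      by_cases h1 : i = x
      · rw [if_pos h1, if_pos h1]; ring
      · rw [if_neg h1, if_neg h1]; ring

lemma membership_det {r : ℕ} [NeZero r] (a : Fin (r+1) → ℝ) (S : Finset (Fin (r+1)))
    (g : Fin r → Fin (r+1)) (hg : Function.Injective g)
    (s0 t0 : Fin (r+1)) (hs0 : s0 ∈ S) (ht0 : t0 ∉ S)
    (hg0 : g 0 = s0) (hgs0 : ∀ k, k ≠ 0 → g k ≠ s0) (hgt0 : ∀ k, g k ≠ t0)
    (hgsurj : ∀ v, v ≠ t0 → ∃ k, g k = v) :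
    ∃ f : Fin r → PairIdx (r+1) ⊕ Unit, Function.Injective f ∧
      |((Cmat a).submatrix g f).det| = |∑ i ∈ S, a i| := by
  classical
  have hne : ∀ j : Fin r, j ≠ 0 → (if g j ∈ S then s0 else t0) ≠ g j := by
    intro j hj
    split_ifs with h
    · exact fun he => hgs0 j hj he.symm
    · exact fun he => hgt0 j he.symm
  have hxne : ∀ (j j' : Fin r), j ≠ 0 → j' ≠ 0 → (if g j ∈ S then s0 else t0) ≠ g j' := by
    intro j j' hj hj'
    split_ifs with h
    · exact fun he => hgs0 j' hj' he.symm
    · exact fun he => hgt0 j' he.symm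
  set f : Fin r → PairIdx (r+1) ⊕ Unit := fun j => if hj : j = 0 then Sum.inr () else
      Sum.inl (mkp (if g j ∈ S then s0 else t0) (g j) (hne j hj)) with hf
  refine ⟨f, ?_, ?_⟩
  · intro j j' hjj'
    simp only [hf] at hjj'
    by_cases h : j = 0 <;> by_cases h' : j' = 0
    · rw [h, h']
    · rw [dif_pos h, dif_neg h'] at hjj'; exact absurd hjj' (by simp)
    · rw [dif_neg h, dif_pos h'] at hjj'; exact absurd hjj' (by simp)
    · rw [dif_neg h, dif_neg h'] at hjj'
      have hv := congrArg Subtype.val (Sum.inl.inj hjj')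
      rcases mkp_val _ (g j) (hne j h) with h1 | h1 <;>
        rcases mkp_val _ (g j') (hne j' h') with h2 | h2
      · rw [h1, h2, Prod.mk.injEq] at hv; exact hg hv.2
      · rw [h1, h2, Prod.mk.injEq] at hv; exact absurd hv.1 (hxne j j' h h')
      · rw [h1, h2, Prod.mk.injEq] at hv; exact absurd hv.1.symm (hxne j' j h' h)
      · rw [h1, h2, Prod.mk.injEq] at hv; exact hg hv.1
  · set m := ∑ i ∈ S, a i with hm
    set Bt : Matrix (Fin r) (Fin r) ℝ := Matrix.of fun i j =>
      if j = 0 then a (g i) else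
        ((if g j ∈ S then (if i = 0 then (1:ℝ) else 0) else 0)
          - (if i = j then 1 else 0)) with hBt
    set εs : Fin r → ℝ := fun j => if j = 0 then 1 else
        (if (if g j ∈ S then s0 else t0) < g j then 1 else -1) with hεs
    have hsub : (Cmat a).submatrix g f = Matrix.of fun i j => εs j * Bt i j := by
      ext i j
      show Cmat a (g i) (f j) = εs j * Bt i j
      by_cases hj : j = 0
      · simp only [hf, dif_pos hj]
        show a (g i) = εs j * Bt i j
        simp only [hεs, hBt, if_pos hj, Matrix.of_apply]
        ring
      · simp only [hf, dif_neg hj]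
        rw [cmat_mkp a _ (g j) (hne j hj)]
        have e2 : (if g i = g j then (1:ℝ) else 0) = (if i = j then 1 else 0) := by
          by_cases hij : i = j
          · rw [if_pos (by rw [hij]), if_pos hij]
          · rw [if_neg (fun hh => hij (hg hh)), if_neg hij]
        have e1 : (if g i = (if g j ∈ S then s0 else t0) then (1:ℝ) else 0)
            = (if g j ∈ S then (if i = 0 then (1:ℝ) else 0) else 0) := by
          by_cases hS : g j ∈ S
          · rw [if_pos hS, if_pos hS]
            by_cases hi : i = 0
            · rw [if_pos (by rw [hi, hg0]), if_pos hi]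
            · rw [if_neg (fun hh => hi (hg (hh.trans hg0.symm))), if_neg hi]
          · rw [if_neg hS, if_neg hS, if_neg (fun hh => hgt0 i hh)]
        rw [e1, e2]
        simp only [hεs, hBt, if_neg hj, Matrix.of_apply]
    have hdet1 : ((Cmat a).submatrix g f).det = (∏ j, εs j) * Bt.det := by
      rw [hsub]; exact Matrix.det_mul_row εs Bt
    have habs_eps : |∏ j, εs j| = 1 := by
      rw [Finset.abs_prod]
      apply Finset.prod_eq_one
      intro j _
      simp only [hεs]
      split_ifs <;> norm_num
    have hco := det_updateCol_add_sum Bt 0 (fun j => a (g j)) (Finset.univ.erase 0)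
      (Finset.notMem_erase 0 _)
    have hcol : ∀ i, Bt i 0 + ∑ j ∈ Finset.univ.erase 0, a (g j) * Bt i j
        = if i = 0 then m else 0 := by
      intro i
      by_cases hi : i = 0
      · rw [if_pos hi]
        have hterm : ∀ j ∈ Finset.univ.erase (0 : Fin r), a (g j) * Bt i j
            = (if g j ∈ S then a (g j) else 0) := by
          intro j hjmem
          have hj0 : j ≠ 0 := (Finset.mem_erase.mp hjmem).1
          simp only [hBt, Matrix.of_apply, if_neg hj0, if_pos hi,
            if_neg (fun hh : i = j => hj0 (hh.symm.trans hi))]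
          split_ifs with h <;> ring
        rw [Finset.sum_congr rfl hterm]
        have hsum2 : ∑ j ∈ Finset.univ.erase (0:Fin r), (if g j ∈ S then a (g j) else 0)
            + (if g 0 ∈ S then a (g 0) else 0)
            = ∑ j : Fin r, (if g j ∈ S then a (g j) else 0) :=
          Finset.sum_erase_add _ _ (Finset.mem_univ 0)
        have hsum3 : ∑ j : Fin r, (if g j ∈ S then a (g j) else 0)
            = ∑ v ∈ Finset.univ.erase t0, (if v ∈ S then a v else 0) := by
          apply Finset.sum_bij (fun (j : Fin r) (_ : j ∈ Finset.univ) => g j)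
          · intro j _; exact Finset.mem_erase.mpr ⟨hgt0 j, Finset.mem_univ _⟩
          · intro j _ j' _ h; exact hg h
          · intro v hv
            obtain ⟨k, hk⟩ := hgsurj v (Finset.mem_erase.mp hv).1
            exact ⟨k, Finset.mem_univ k, hk⟩
          · intro j _; rfl
        have hsum4 : ∑ v ∈ Finset.univ.erase t0, (if v ∈ S then a v else 0)
            + (if t0 ∈ S then a t0 else 0)
            = ∑ v : Fin (r+1), (if v ∈ S then a v else 0) :=
          Finset.sum_erase_add _ _ (Finset.mem_univ t0)
        have hsum5 : ∑ v : Fin (r+1), (if v ∈ S then a v else 0) = m := by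
          rw [hm, Finset.sum_ite_mem, Finset.univ_inter]
        have hBt00 : Bt i 0 = a s0 := by
          simp only [hBt, Matrix.of_apply, hi, hg0, eq_self_iff_true, if_true]
        rw [hBt00]
        rw [hg0, if_pos hs0] at hsum2
        rw [if_neg ht0, add_zero] at hsum4
        linarith
      · rw [if_neg hi]
        have hterm : ∀ j ∈ Finset.univ.erase (0 : Fin r), a (g j) * Bt i j
            = (if j = i then -a (g i) else 0) := by
          intro j hjmem
          have hj0 : j ≠ 0 := (Finset.mem_erase.mp hjmem).1
          simp only [hBt, Matrix.of_apply, if_neg hj0, if_neg hi]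
          by_cases hij : i = j
          · rw [if_pos hij, if_pos hij.symm, ← hij]
            split_ifs <;> ring
          · rw [if_neg hij, if_neg (show ¬j = i from fun h => hij h.symm)]
            split_ifs <;> ring
        rw [Finset.sum_congr rfl hterm,
          Finset.sum_ite_eq' (Finset.univ.erase (0 : Fin r)) i (fun _ => -a (g i)),
          if_pos (Finset.mem_erase.mpr ⟨hi, Finset.mem_univ i⟩)]
        have hBt0 : Bt i 0 = a (g i) := by
          simp only [hBt, Matrix.of_apply, eq_self_iff_true, if_true]
        rw [hBt0]; ring
    have hco2 : (Bt.updateCol 0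
        (fun i => Bt i 0 + ∑ j ∈ Finset.univ.erase 0, a (g j) * Bt i j)).det = Bt.det :=
      det_updateCol_add_sum Bt 0 (fun j => a (g j)) (Finset.univ.erase 0)
        (Finset.notMem_erase 0 _)
    set Bu := Bt.updateCol 0 (fun i => if i = 0 then m else 0) with hBu
    have hco3 : Bu.det = Bt.det := by
      have he : (fun i : Fin r => if i = 0 then m else 0)
          = (fun i => Bt i 0 + ∑ j ∈ Finset.univ.erase 0, a (g j) * Bt i j) :=
        funext (fun i => (hcol i).symm)
      rw [← hco2, hBu, he]
    have htri : Bu.det = ∏ i : Fin r, Bu i i := by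
      apply Matrix.det_of_upperTriangular
      intro i j hij
      have hij' : (j:ℕ) < (i:ℕ) := hij
      have hi0 : i ≠ 0 := by
        intro h
        rw [h] at hij'
        simp at hij'
      rw [hBu, Matrix.updateCol_apply]
      by_cases hj : j = 0
      · rw [if_pos hj, if_neg hi0]
      · rw [if_neg hj]
        simp only [hBt, Matrix.of_apply, if_neg hj, if_neg hi0,
          if_neg (ne_of_gt hij : i ≠ j)]
        split_ifs <;> ring
    have hdiag : ∏ i : Fin r, Bu i i
        = m * (-1:ℝ)^(Finset.univ.erase (0:Fin r)).card := by
      rw [← Finset.mul_prod_erase Finset.univ (fun i => Bu i i)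
        (Finset.mem_univ (0:Fin r))]
      have h1 : Bu 0 0 = m := by
        rw [hBu, Matrix.updateCol_apply]
        simp
      have h2 : ∀ i ∈ Finset.univ.erase (0:Fin r), Bu i i = -1 := by
        intro i hi
        have hi0 : i ≠ 0 := (Finset.mem_erase.mp hi).1
        rw [hBu, Matrix.updateCol_apply, if_neg hi0]
        simp only [hBt, Matrix.of_apply, if_neg hi0, eq_self_iff_true, if_true]
        split_ifs <;> ring
      rw [h1, Finset.prod_congr rfl h2, Finset.prod_const]
    calc |((Cmat a).submatrix g f).det|
        = |∏ j : Fin r, εs j| * |Bt.det| := by rw [hdet1, abs_mul]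
      _ = |Bt.det| := by rw [habs_eps, one_mul]
      _ = |Bu.det| := by rw [hco3]
      _ = |m| * |(-1:ℝ)^(Finset.univ.erase (0:Fin r)).card| := by
          rw [htri, hdiag, abs_mul]
      _ = |m| := by rw [abs_pow, abs_neg, abs_one, one_pow, mul_one]

end ExtraColAux

/-- The maximum absolute value of the determinant of an `r × r` submatrix of
`[D_{r+1} | a]` equals `max 1 (max_{S ⊆ [r+1]} ∑_{i ∈ S} a i)`. -/
theorem extra_column_determinant (r : ℕ) (hr : 1 ≤ r) (a : Fin (r + 1) → ℝ)
    (ha : a ≠ 0) (hsum : ∑ i, a i = 0) :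
    IsGreatest
      {x : ℝ | ∃ (g : Fin r → Fin (r + 1)) (f : Fin r → PairIdx (r + 1) ⊕ Unit),
        Function.Injective g ∧ Function.Injective f ∧
        x = |((Cmat a).submatrix g f).det|}
      (max 1 (Finset.univ.sup' Finset.univ_nonempty
        (fun S : Finset (Fin (r + 1)) => ∑ i ∈ S, a i))) := by
  classical
  haveI : NeZero r := ⟨by omega⟩
  set fsup := Finset.univ.sup' Finset.univ_nonempty
    (fun S : Finset (Fin (r + 1)) => ∑ i ∈ S, a i) with hfsup
  have hsumle : ∀ S : Finset (Fin (r+1)), ∑ i ∈ S, a i ≤ fsup := by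
    intro S
    rw [hfsup]
    exact Finset.le_sup' (fun S : Finset (Fin (r+1)) => ∑ i ∈ S, a i)
      (Finset.mem_univ S)
  have hfsup0 : 0 ≤ fsup := by
    have := hsumle (∅ : Finset (Fin (r+1)))
    simpa using this
  have habs : ∀ S : Finset (Fin (r+1)), |∑ i ∈ S, a i| ≤ max 1 fsup := by
    intro S
    rw [abs_le]
    constructor
    · have hcompl : ∑ i ∈ Sᶜ, a i ≤ fsup := hsumle _
      have hsplit : ∑ i ∈ S, a i + ∑ i ∈ Sᶜ, a i = 0 := by
        rw [Finset.sum_add_sum_compl]; exact hsum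
      have := le_max_right (1:ℝ) fsup
      linarith
    · exact le_trans (hsumle S) (le_max_right _ _)
  constructor
  · -- membership
    by_cases hcase : fsup ≤ 1
    · have hmax : max 1 fsup = 1 := max_eq_left hcase
      rw [Set.mem_setOf_eq, hmax]
      refine ⟨Fin.castSucc,
        fun k => Sum.inl ⟨(k.castSucc, Fin.last r), Fin.castSucc_lt_last k⟩,
        Fin.castSucc_injective r, ?_, ?_⟩
      · intro j j' hjj'
        simp only [Sum.inl.injEq, Subtype.mk.injEq, Prod.mk.injEq] at hjj'
        exact Fin.castSucc_injective r hjj'.1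
      · have hid : (Cmat a).submatrix Fin.castSucc
            (fun k : Fin r => (Sum.inl ⟨(k.castSucc, Fin.last r), Fin.castSucc_lt_last k⟩
              : PairIdx (r+1) ⊕ Unit)) = 1 := by
          ext i j
          show (if i.castSucc = j.castSucc then (1:ℝ)
            else if i.castSucc = Fin.last r then -1 else 0) = _
          by_cases h : i = j
          · rw [if_pos (by rw [h]), h, Matrix.one_apply_eq]
          · rw [if_neg (fun hh => h (Fin.castSucc_injective r hh)),
              if_neg (Fin.castSucc_lt_last i).ne, Matrix.one_apply_ne h]
        rw [hid, Matrix.det_one, abs_one]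
    · push_neg at hcase
      have hmax : max 1 fsup = fsup := max_eq_right (le_of_lt hcase)
      rw [Set.mem_setOf_eq, hmax]
      obtain ⟨S, -, hS⟩ := Finset.exists_mem_eq_sup' (Finset.univ_nonempty)
        (fun S : Finset (Fin (r + 1)) => ∑ i ∈ S, a i)
      have hSpos : (0:ℝ) < ∑ i ∈ S, a i := by rw [← hS]; linarith
      obtain ⟨s0, hs0⟩ : ∃ s0, s0 ∈ S := by
        by_contra h
        push_neg at h
        rw [Finset.eq_empty_of_forall_notMem h, Finset.sum_empty] at hSpos
        exact lt_irrefl _ hSpos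
      obtain ⟨t0, ht0⟩ : ∃ t0, t0 ∉ S := by
        by_contra h
        push_neg at h
        have : S = Finset.univ := Finset.eq_univ_iff_forall.mpr h
        rw [this, hsum] at hSpos
        exact lt_irrefl _ hSpos
      have hs0t0 : s0 ≠ t0 := fun h => ht0 (h ▸ hs0)
      have hcard : Fintype.card {x : Fin (r+1) // x ≠ t0} = r := by
        simp [Fintype.card_subtype_compl]
      set e : Fin r ≃ {x : Fin (r+1) // x ≠ t0} := (Fintype.equivFinOfCardEq hcard).symm
        with he
      set k0 : Fin r := e.symm ⟨s0, hs0t0⟩ with hk0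
      set sw : Equiv.Perm (Fin r) := Equiv.swap (0 : Fin r) k0 with hsw
      set g : Fin r → Fin (r+1) := fun k => ((e (sw k)) : Fin (r+1)) with hg
      have hginj : Function.Injective g := fun x y h =>
        sw.injective (e.injective (Subtype.ext h))
      have hg0 : g 0 = s0 := by
        rw [hg]
        show ((e (sw 0)) : Fin (r+1)) = s0
        rw [hsw, Equiv.swap_apply_left, hk0, Equiv.apply_symm_apply]
      have hgt0 : ∀ k, g k ≠ t0 := fun k => (e (sw k)).prop
      have hgs0 : ∀ k, k ≠ 0 → g k ≠ s0 := by
        intro k hk h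
        have h1 : e (sw k) = ⟨s0, hs0t0⟩ := Subtype.ext h
        have h2 : sw k = k0 := e.injective (by rw [h1, hk0, Equiv.apply_symm_apply])
        have h3 : sw k = sw 0 := by rw [h2, hsw, Equiv.swap_apply_left]
        exact hk (sw.injective h3)
      have hgsurj : ∀ v : Fin (r+1), v ≠ t0 → ∃ k, g k = v := by
        intro v hv
        refine ⟨sw.symm (e.symm ⟨v, hv⟩), ?_⟩
        rw [hg]
        show ((e (sw (sw.symm _))) : Fin (r+1)) = v
        rw [Equiv.apply_symm_apply, Equiv.apply_symm_apply]
      obtain ⟨f, hfinj, hfdet⟩ := ExtraColAux.membership_det a S g hginj s0 t0 hs0 ht0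
        hg0 hgs0 hgt0 hgsurj
      refine ⟨g, f, hginj, hfinj, ?_⟩
      rw [hfdet, ← hS, abs_of_pos (by rw [hS]; exact hSpos)]
  · -- upper bound
    rintro x ⟨g, f, hginj, hfinj, rfl⟩
    apply ExtraColAux.key a (max 1 fsup) habs (le_max_left _ _) r
    have hedgecol : ∀ (j : Fin r) (pr : PairIdx (r+1)), f j = Sum.inl pr →
        ExtraColAux.EdgeCol (fun i => (Cmat a).submatrix g f i j) := by
      intro j pr hj
      refine ⟨1, ExtraColAux.pb g pr.val.1, ExtraColAux.pb g pr.val.2, Or.inl rfl,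
        fun k => ?_⟩
      rw [ExtraColAux.ind_pb g hginj, ExtraColAux.ind_pb g hginj]
      show Cmat a (g k) (f j) = _
      rw [hj]
      show (if g k = pr.val.1 then (1:ℝ) else if g k = pr.val.2 then -1 else 0) = _
      have hne : pr.val.1 ≠ pr.val.2 := ne_of_lt pr.prop
      by_cases h1 : g k = pr.val.1
      · rw [if_pos h1, if_pos h1, if_neg (fun h2 => hne (h1.symm.trans h2))]; ring
      · rw [if_neg h1, if_neg h1]
        by_cases h2 : g k = pr.val.2
        · rw [if_pos h2, if_pos h2]; ring
        · rw [if_neg h2, if_neg h2]; ring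
    by_cases hex : ∃ jb, f jb = Sum.inr ()
    · obtain ⟨jb, hjb⟩ := hex
      right
      refine ⟨fun i => {g i}, ?_, jb, ?_, ?_⟩
      · intro i i' hii'
        exact Finset.disjoint_singleton.mpr (fun h => hii' (hginj h))
      · intro i
        show Cmat a (g i) (f jb) = _
        rw [hjb]
        show a (g i) = _
        rw [Finset.sum_singleton]
      · intro j hj
        have hfj : ∃ pr, f j = Sum.inl pr := by
          cases hfj : f j with
          | inl pr => exact ⟨pr, rfl⟩
          | inr u => cases u; exact absurd (hfinj (hfj.trans hjb.symm)) hj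
        obtain ⟨pr, hpr⟩ := hfj
        exact hedgecol j pr hpr
    · left
      intro j
      have hfj : ∃ pr, f j = Sum.inl pr := by
        cases hfj : f j with
        | inl pr => exact ⟨pr, rfl⟩
        | inr u => cases u; exact absurd ⟨j, hfj⟩ hex
      obtain ⟨pr, hpr⟩ := hfj
      exact hedgecol j pr hpr
end

section
/- Let r ≥ 1 be an integer and let a ∈ ℤ^{r+1} satisfy Σ_{i=1}^{r+1} a_i = 0. Suppose the matrix [D_{r+1} | a] has nonzero pairwise non-parallel columns (in particular a ≠ 0 and a is not a scalar multiple of any e_i − e_j), and every r×r submatrix of [D_{r+1} | a] has determinant of absolute value at most 3. Then the multiset of nonzero entries of a, after possibly negating every entry, is one of the following seven multisets: {−3, 2, 1}, {−2, 1, 1}, {−3, 1, 1, 1}, {−2, 2, −1, 1}, {−1, −1, 1, 1}, {−2, −1, 1, 1, 1}, {−1, −1, −1, 1, 1, 1}. -/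
/-- The integer matrix `D_r` whose columns are `e_i - e_j` for `i < j`. -/
def Dmat (r : ℕ) : Matrix (Fin r) (PairIdx r) ℤ :=
  Matrix.of fun i p => if i = p.val.1 then 1 else if i = p.val.2 then -1 else 0

/-- Two integer vectors are parallel if they are linearly dependent over `ℚ`. -/
def IntParallel {r : ℕ} (u v : Fin r → ℤ) : Prop :=
  ¬ LinearIndependent ℚ ![(fun i => (u i : ℚ)), (fun i => (v i : ℚ))]

namespace PCAux

variable {p q' : ℕ}

def Bm [NeZero p] (v : Fin p → ℤ) : Matrix (Fin p) (Fin p) ℤ :=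
  Matrix.of fun k l => if l = 0 then v k else if k = 0 then 1 else if k = l then (-1 : ℤ) else 0

def Em (p : ℕ) [NeZero p] : Matrix (Fin p) (Fin p) ℤ :=
  Matrix.of fun k l => if k = 0 then 1 else if k = l then (1 : ℤ) else 0

def Bm' [NeZero p] (v : Fin p → ℤ) : Matrix (Fin p) (Fin p) ℤ :=
  Matrix.of fun k l =>
    if k = 0 then (if l = 0 then ∑ i, v i else 0)
    else if l = 0 then v k else if k = l then (-1 : ℤ) else 0

lemma Em_mul_Bm [NeZero p] (v : Fin p → ℤ) : Em p * Bm v = Bm' v := by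
  ext k l
  simp only [Em, Bm, Bm', Matrix.mul_apply, Matrix.of_apply]
  by_cases hk : k = 0
  · subst hk
    by_cases hl : l = 0
    · subst hl; simp
    · have : ∀ m : Fin p, (if (0:Fin p) = 0 then (1:ℤ) else if 0 = m then 1 else 0) *
            (if l = 0 then v m else if m = 0 then 1 else if m = l then (-1:ℤ) else 0)
          = (if m = 0 then (1:ℤ) else 0) + (if m = l then (-1:ℤ) else 0) := by
        intro m
        rcases eq_or_ne m 0 with rfl | hm
        · simp [hl, Ne.symm hl]
        · rcases eq_or_ne m l with rfl | hml
          · simp [hl, hm]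
          · simp [hl, hm, hml]
      rw [Finset.sum_congr rfl (fun m _ => this m), Finset.sum_add_distrib,
        Finset.sum_ite_eq' , Finset.sum_ite_eq']
      simp [hl]
  · simp only [if_neg hk]
    rw [Finset.sum_congr rfl (fun m _ => ?_), Finset.sum_ite_eq Finset.univ k
      (fun m => if l = 0 then v m else if m = 0 then 1 else if m = l then (-1:ℤ) else 0)]
    · simp [hk]
    · rcases eq_or_ne k m with rfl | hkm
      · simp
      · simp [if_neg (Ne.symm hkm), hkm]

lemma det_Em [NeZero p] : (Em p).det = 1 := by
  rw [Matrix.det_of_upperTriangular (M := Em p)]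
  · simp [Em]
  · intro i j hij
    have hij' : (j : Fin p) < i := hij
    have h1 : i ≠ 0 := by rintro rfl; rw [Fin.lt_iff_val_lt_val] at hij'; simp at hij' 
    have h2 : i ≠ j := (ne_of_lt hij').symm
    simp [Em, h1, h2]

lemma abs_det_Bm [NeZero p] (v : Fin p → ℤ) : |(Bm v).det| = |∑ i, v i| := by
  have h1 : (Bm v).det = (Bm' v).det := by
    have := congrArg Matrix.det (Em_mul_Bm v)
    rwa [Matrix.det_mul, det_Em, one_mul] at this
  rw [h1, Matrix.det_of_lowerTriangular (Bm' v)]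
  · rw [Finset.abs_prod]
    have : ∀ k : Fin p, |Bm' v k k| = if k = 0 then |∑ i, v i| else 1 := by
      intro k
      rcases eq_or_ne k 0 with rfl | hk
      · simp [Bm']
      · simp [Bm', hk]
    rw [Finset.prod_congr rfl (fun k _ => this k), Finset.prod_ite_eq']
    simp
  · intro i j hij
    have hij' : i < j := hij
    have h1 : i ≠ j := ne_of_lt hij'
    have h2 : j ≠ 0 := by
      rintro rfl; rw [Fin.lt_iff_val_lt_val] at hij'; simp at hij' 
    rcases eq_or_ne i 0 with rfl | hi
    · simp [Bm', h2]
    · simp [Bm', hi, h1, h2]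

def Cm [NeZero p] (w : Fin q' → ℤ) : Matrix (Fin q') (Fin p) ℤ :=
  Matrix.of fun k l => if l = 0 then w k else 0

def Dm (q' : ℕ) : Matrix (Fin q') (Fin q') ℤ :=
  Matrix.of fun k l => if k = l then (-1 : ℤ) else 0

lemma abs_det_Dm : |(Dm q').det| = 1 := by
  have : Dm q' = Matrix.diagonal (fun _ => (-1 : ℤ)) := by
    ext k l
    rcases eq_or_ne k l with rfl | h
    · simp [Dm, Matrix.diagonal_apply_eq]
    · simp [Dm, h, Matrix.diagonal_apply_ne _ h]
  rw [this, Matrix.det_diagonal]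
  simp [Finset.abs_prod]

lemma abs_det_blocks [NeZero p] (v : Fin p → ℤ) (w : Fin q' → ℤ) :
    |(Matrix.fromBlocks (Bm v) 0 (Cm w) (Dm q')).det| = |∑ i, v i| := by
  rw [Matrix.det_fromBlocks_zero₁₂, abs_mul, abs_det_Bm, abs_det_Dm, mul_one]

end PCAux

namespace PCAux

lemma subset_sum_bound (r : ℕ) (a : Fin (r + 1) → ℤ)
    (A : Matrix (Fin (r + 1)) (PairIdx (r + 1) ⊕ Unit) ℤ)
    (hA : A = Matrix.of fun i => Sum.elim (fun p => Dmat (r + 1) i p) (fun _ => a i))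
    (hmod : ∀ (g : Fin r → Fin (r + 1)) (f : Fin r → PairIdx (r + 1) ⊕ Unit),
      Function.Injective g → Function.Injective f →
      |(A.submatrix g f).det| ≤ 3)
    (S : Finset (Fin (r + 1))) (hS : S.Nonempty) (hT : Sᶜ.Nonempty) :
    |∑ i ∈ S, a i| ≤ 3 := by
  classical
  have hp : 0 < S.card := Finset.card_pos.mpr hS
  have hqpos : 0 < Sᶜ.card := Finset.card_pos.mpr hT
  obtain ⟨q', hq'⟩ : ∃ q', Sᶜ.card = q' + 1 := ⟨Sᶜ.card - 1, by omega⟩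
  have hpq : S.card + Sᶜ.card = r + 1 := by
    rw [Finset.card_add_card_compl]; simp
  haveI : NeZero S.card := ⟨hp.ne'⟩
  set s : Fin S.card ↪o Fin (r+1) := S.orderEmbOfFin rfl with hs_def
  set t : Fin (q' + 1) ↪o Fin (r+1) := Sᶜ.orderEmbOfFin hq' with ht_def
  have hsmem : ∀ k, s k ∈ S := fun k => Finset.orderEmbOfFin_mem S rfl k
  have htmem : ∀ k, t k ∈ Sᶜ := fun k => Finset.orderEmbOfFin_mem Sᶜ hq' k
  have hst : ∀ k j, s k ≠ t j := fun k j h =>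
    (Finset.mem_compl.mp (htmem j)) (h ▸ hsmem k)
  have hsinj : Function.Injective s := s.injective
  have htinj : Function.Injective t := t.injective
  have hs0 : ∀ k : Fin S.card, k ≠ 0 → s 0 < s k := fun k hk =>
    s.strictMono (lt_of_le_of_ne (Fin.zero_le k) (Ne.symm hk))
  have ht0 : ∀ k : Fin q', t 0 < t k.succ := fun k => t.strictMono (Fin.succ_pos k)
  set G : Fin S.card ⊕ Fin q' → Fin (r+1) :=
    Sum.elim (fun k => s k) (fun k => t k.succ) with hG_def
  set F : Fin S.card ⊕ Fin q' → PairIdx (r+1) ⊕ Unit :=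
    Sum.elim
      (fun k => if hk : k = (0 : Fin S.card) then Sum.inr ()
        else Sum.inl ⟨(s 0, s k), hs0 k hk⟩)
      (fun k => Sum.inl ⟨(t 0, t k.succ), ht0 k⟩) with hF_def
  have hGinj : Function.Injective G := by
    rintro (k | k) (k' | k') hxy <;> simp only [hG_def, Sum.elim_inl, Sum.elim_inr] at hxy
    · exact congrArg Sum.inl (hsinj hxy)
    · exact absurd hxy (hst _ _)
    · exact absurd hxy.symm (hst _ _)
    · exact congrArg Sum.inr (Fin.succ_injective _ (htinj hxy))
  have hFinj : Function.Injective F := by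
    rintro (k | k) (k' | k') hxy <;> simp only [hF_def, Sum.elim_inl, Sum.elim_inr] at hxy
    · by_cases hk : k = 0 <;> by_cases hk' : k' = 0
      · rw [hk, hk']
      · rw [dif_pos hk, dif_neg hk'] at hxy; exact absurd hxy (by simp)
      · rw [dif_neg hk, dif_pos hk'] at hxy; exact absurd hxy (by simp)
      · rw [dif_neg hk, dif_neg hk'] at hxy
        simp only [Sum.inl.injEq, Subtype.mk.injEq, Prod.mk.injEq] at hxy
        exact congrArg Sum.inl (hsinj hxy.2)
    · by_cases hk : k = 0
      · rw [dif_pos hk] at hxy; exact absurd hxy (by simp)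
      · rw [dif_neg hk] at hxy
        simp only [Sum.inl.injEq, Subtype.mk.injEq, Prod.mk.injEq] at hxy
        exact absurd hxy.1 (hst _ _)
    · by_cases hk' : k' = 0
      · rw [dif_pos hk'] at hxy; exact absurd hxy (by simp)
      · rw [dif_neg hk'] at hxy
        simp only [Sum.inl.injEq, Subtype.mk.injEq, Prod.mk.injEq] at hxy
        exact absurd hxy.1.symm (hst _ _)
    · simp only [Sum.inl.injEq, Subtype.mk.injEq, Prod.mk.injEq] at hxy
      exact congrArg Sum.inr (Fin.succ_injective _ (htinj hxy.2))
  have hr2 : S.card + q' = r := by omega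
  let e : Fin r ≃ Fin S.card ⊕ Fin q' := (finCongr hr2.symm).trans finSumFinEquiv.symm
  have hb := hmod (G ∘ e) (F ∘ e) (hGinj.comp e.injective) (hFinj.comp e.injective)
  have hsub : A.submatrix (G ∘ e) (F ∘ e) = (A.submatrix G F).submatrix e e := rfl
  rw [hsub, Matrix.abs_det_submatrix_equiv_equiv] at hb
  have hAGF : A.submatrix G F =
      Matrix.fromBlocks (Bm (fun k => a (s k))) 0 (Cm (fun k => a (t k.succ))) (Dm q') := by
    subst hA
    ext x y
    rcases x with k | k <;> rcases y with l | l
    · by_cases hl : l = 0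
      · subst hl
        simp [hG_def, hF_def, Bm, Matrix.submatrix_apply]
      · simp only [Matrix.submatrix_apply, hG_def, hF_def, Sum.elim_inl, dif_neg hl,
          Matrix.fromBlocks_apply₁₁, Matrix.of_apply, Bm, Dmat, if_neg hl]
        rcases eq_or_ne k 0 with rfl | hk
        · simp
        · rw [if_neg (fun h => hk (hsinj h)), if_neg hk]
          rcases eq_or_ne k l with rfl | hkl
          · simp
          · rw [if_neg (fun h => hkl (hsinj h)), if_neg hkl]
    · simp only [Matrix.submatrix_apply, hG_def, hF_def, Sum.elim_inl, Sum.elim_inr,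
        Matrix.fromBlocks_apply₁₂, Matrix.of_apply, Dmat, Matrix.zero_apply]
      rw [if_neg (hst k 0), if_neg (hst k l.succ)]
    · by_cases hl : l = 0
      · subst hl
        simp [hG_def, hF_def, Cm, Matrix.submatrix_apply]
      · simp only [Matrix.submatrix_apply, hG_def, hF_def, Sum.elim_inl, Sum.elim_inr,
          dif_neg hl, Matrix.fromBlocks_apply₂₁, Matrix.of_apply, Cm, Dmat, if_neg hl]
        rw [if_neg (fun h => hst 0 k.succ h.symm), if_neg (fun h => hst l k.succ h.symm)]
    · simp only [Matrix.submatrix_apply, hG_def, hF_def, Sum.elim_inl, Sum.elim_inr,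
        Matrix.fromBlocks_apply₂₂, Matrix.of_apply, Dm, Dmat]
      rw [if_neg (fun h => Fin.succ_ne_zero k (htinj h))]
      rcases eq_or_ne k l with rfl | hkl
      · simp
      · rw [if_neg (fun h => hkl (Fin.succ_injective _ (htinj h))), if_neg hkl]
  rw [hAGF, abs_det_blocks] at hb
  have hsum : ∑ k : Fin S.card, a (s k) = ∑ i ∈ S, a i := by
    rw [← Finset.sum_coe_sort S a]
    exact Fintype.sum_equiv (S.orderIsoOfFin rfl).toEquiv _ _
      (fun k => by rw [← Finset.coe_orderIsoOfFin_apply]; rfl)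
  rwa [hsum] at hb

end PCAux

namespace PCAux

lemma small_pos : ∀ (s : Multiset ℤ), (∀ x ∈ s, 0 < x) → s.sum ≤ 3 →
    s = 0 ∨ s = {1} ∨ s = {2} ∨ s = {3} ∨ s = ({1,1} : Multiset ℤ) ∨
      s = ({2,1} : Multiset ℤ) ∨ s = ({1,1,1} : Multiset ℤ) := by
  intro s
  induction s using Multiset.induction with
  | empty => intro _ _; exact Or.inl rfl
  | cons x t ih =>
    intro hpos hsum
    have hx : 0 < x := hpos x (Multiset.mem_cons_self x t)
    have htp : ∀ y ∈ t, 0 < y := fun y hy => hpos y (Multiset.mem_cons_of_mem hy)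
    rw [Multiset.sum_cons] at hsum
    have ht0 : 0 ≤ t.sum := Multiset.sum_nonneg (fun y hy => le_of_lt (htp y hy))
    have htsum : t.sum ≤ 3 := by omega
    rcases ih htp htsum with rfl | rfl | rfl | rfl | rfl | rfl | rfl <;>
      simp only [Multiset.insert_eq_cons, Multiset.sum_cons, Multiset.sum_singleton,
        Multiset.sum_zero] at hsum <;>
      (have hub : x ≤ 3 := by omega) <;> interval_cases x <;> first | omega | decide

lemma mem_target {x : Multiset ℤ}
    (h : x = ({-3,2,1} : Multiset ℤ) ∨ x = ({-2,1,1} : Multiset ℤ) ∨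
      x = ({-3,1,1,1} : Multiset ℤ) ∨ x = ({-2,2,-1,1} : Multiset ℤ) ∨
      x = ({-1,-1,1,1} : Multiset ℤ) ∨ x = ({-2,-1,1,1,1} : Multiset ℤ) ∨
      x = ({-1,-1,-1,1,1,1} : Multiset ℤ)) :
    x ∈ ({ ({-3, 2, 1} : Multiset ℤ),
           ({-2, 1, 1} : Multiset ℤ),
           ({-3, 1, 1, 1} : Multiset ℤ),
           ({-2, 2, -1, 1} : Multiset ℤ),
           ({-1, -1, 1, 1} : Multiset ℤ),
           ({-2, -1, 1, 1, 1} : Multiset ℤ),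
           ({-1, -1, -1, 1, 1, 1} : Multiset ℤ) } : Set (Multiset ℤ)) := by
  rcases h with rfl|rfl|rfl|rfl|rfl|rfl|rfl <;> simp

lemma classify (m : Multiset ℤ) (h0 : ∀ x ∈ m, x ≠ 0) (hsum : m.sum = 0)
    (hcard : 3 ≤ Multiset.card m)
    (hposs : (m.filter (fun x => 0 < x)).sum ≤ 3) :
    ∃ ε : ℤ, (ε = 1 ∨ ε = -1) ∧ Multiset.map (fun x => ε * x) m ∈
      ({ ({-3, 2, 1} : Multiset ℤ),
         ({-2, 1, 1} : Multiset ℤ),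
         ({-3, 1, 1, 1} : Multiset ℤ),
         ({-2, 2, -1, 1} : Multiset ℤ),
         ({-1, -1, 1, 1} : Multiset ℤ),
         ({-2, -1, 1, 1, 1} : Multiset ℤ),
         ({-1, -1, -1, 1, 1, 1} : Multiset ℤ) } : Set (Multiset ℤ)) := by
  classical
  have key : ∃ P N : Multiset ℤ, m = P + N ∧ (∀ x ∈ P, 0 < x) ∧ (∀ x ∈ N, x < 0) ∧
      P.sum ≤ 3 := by
    refine ⟨m.filter (fun x => 0 < x), m.filter (fun x => ¬ 0 < x),
      (Multiset.filter_add_not _ m).symm, fun x hx => (Multiset.mem_filter.mp hx).2,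
      fun x hx => ?_, hposs⟩
    have h1 := (Multiset.mem_filter.mp hx).2
    have h2 := h0 x (Multiset.mem_of_mem_filter hx)
    omega
  obtain ⟨P, N, rfl, hPpos, hNneg, hP3⟩ := key
  have hPs : P.sum + N.sum = 0 := by rw [← Multiset.sum_add]; exact hsum
  have hN'pos : ∀ x ∈ N.map (fun y => -y), 0 < x := by
    intro x hx
    obtain ⟨y, hy, rfl⟩ := Multiset.mem_map.mp hx
    exact neg_pos.mpr (hNneg y hy)
  have hN'sum : (N.map (fun y => -y)).sum ≤ 3 := by
    rw [Multiset.sum_map_neg']; omega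
  have hNlit : N = Multiset.map (fun y => -y) (N.map (fun y => -y)) := by
    rw [Multiset.map_map]; simp
  rcases small_pos P hPpos hP3 with rfl|rfl|rfl|rfl|rfl|rfl|rfl <;>
    rcases small_pos _ hN'pos hN'sum with h|h|h|h|h|h|h <;>
    rw [h] at hNlit <;>
    simp only [Multiset.insert_eq_cons, Multiset.map_zero, Multiset.map_cons,
      Multiset.map_singleton] at hNlit <;>
    subst hNlit <;>
    first
      | exact absurd hsum (by decide)
      | exact absurd hcard (by decide)
      | exact ⟨1, Or.inl rfl, mem_target (by decide)⟩
      | exact ⟨-1, Or.inr rfl, mem_target (by decide)⟩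

end PCAux


theorem possible_columns (r : ℕ) (hr : 1 ≤ r) (a : Fin (r + 1) → ℤ)
    (hsum : ∑ i, a i = 0)
    (A : Matrix (Fin (r + 1)) (PairIdx (r + 1) ⊕ Unit) ℤ)
    (hA : A = Matrix.of fun i => Sum.elim (fun p => Dmat (r + 1) i p) (fun _ => a i))
    (hnonzero : ∀ j, (fun i => A i j) ≠ 0)
    (hnonpar : ∀ j j', j ≠ j' → ¬ IntParallel (fun i => A i j) (fun i => A i j'))
    (hmod : ∀ (g : Fin r → Fin (r + 1)) (f : Fin r → PairIdx (r + 1) ⊕ Unit),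
      Function.Injective g → Function.Injective f →
      |(A.submatrix g f).det| ≤ 3) :
    ∃ ε : ℤ, (ε = 1 ∨ ε = -1) ∧
      Multiset.map (fun i => ε * a i)
          (Finset.filter (fun i => a i ≠ 0) Finset.univ).val ∈
        ({ ({-3, 2, 1} : Multiset ℤ),
           ({-2, 1, 1} : Multiset ℤ),
           ({-3, 1, 1, 1} : Multiset ℤ),
           ({-2, 2, -1, 1} : Multiset ℤ),
           ({-1, -1, 1, 1} : Multiset ℤ),
           ({-2, -1, 1, 1, 1} : Multiset ℤ),
           ({-1, -1, -1, 1, 1, 1} : Multiset ℤ) } : Set (Multiset ℤ)) := by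
  classical
  -- basic facts about `a`
  have ha_ne : ∃ i, a i ≠ 0 := by
    have h := hnonzero (Sum.inr ())
    subst hA
    rcases Function.ne_iff.mp h with ⟨i, hi⟩
    exact ⟨i, hi⟩
  have hpos_ex : ∃ i, 0 < a i := by
    by_contra hno
    push_neg at hno
    obtain ⟨i, hi⟩ := ha_ne
    have : ∑ j, a j < ∑ j : Fin (r+1), (0 : ℤ) :=
      Finset.sum_lt_sum (fun j _ => hno j) ⟨i, Finset.mem_univ i, lt_of_le_of_ne (hno i) hi⟩
    simp [hsum] at this
  have hneg_ex : ∃ i, a i < 0 := by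
    by_contra hno
    push_neg at hno
    obtain ⟨i, hi⟩ := ha_ne
    have : ∑ j : Fin (r+1), (0 : ℤ) < ∑ j, a j :=
      Finset.sum_lt_sum (fun j _ => hno j) ⟨i, Finset.mem_univ i, lt_of_le_of_ne (hno i) (Ne.symm hi)⟩
    simp [hsum] at this
  -- the multiset of nonzero entries
  set K : Finset (Fin (r+1)) := Finset.filter (fun i => a i ≠ 0) Finset.univ with hK
  have hKsum : ∑ i ∈ K, a i = 0 := by
    rw [hK, Finset.sum_filter_ne_zero]; exact hsum
  -- at least three nonzero entries
  have hKcard : 3 ≤ K.card := by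
    by_contra hlt
    push_neg at hlt
    interval_cases h : K.card
    · obtain ⟨i, hi⟩ := ha_ne
      have : i ∈ K := by rw [hK]; simp [hi]
      rw [Finset.card_eq_zero.mp h] at this
      exact absurd this (Finset.notMem_empty i)
    · obtain ⟨i0, hi0⟩ := Finset.card_eq_one.mp h
      have hmem : i0 ∈ K := by rw [hi0]; exact Finset.mem_singleton_self i0
      have hne : a i0 ≠ 0 := by
        rw [hK] at hmem; exact (Finset.mem_filter.mp hmem).2
      rw [hi0, Finset.sum_singleton] at hKsum
      exact hne hKsum
    · obtain ⟨i, j, hij, hKij⟩ := Finset.card_eq_two.mp h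
      have hsum2 : a i + a j = 0 := by rwa [hKij, Finset.sum_pair hij] at hKsum
      have hai : a i ≠ 0 := by
        have : i ∈ K := by rw [hKij]; simp
        rw [hK] at this; exact (Finset.mem_filter.mp this).2
      have hout : ∀ k, k ≠ i → k ≠ j → a k = 0 := by
        intro k hki hkj
        by_contra hk
        have : k ∈ K := by rw [hK]; simp [hk]
        rw [hKij] at this
        simp only [Finset.mem_insert, Finset.mem_singleton] at this
        tauto
      -- in both orders, the column a is parallel to a column of D
      have key : ∀ u v : Fin (r+1), u < v → a u + a v = 0 → a u ≠ 0 →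
          (∀ k, k ≠ u → k ≠ v → a k = 0) → False := by
        intro u v huv hsum2 hau hout
        refine hnonpar (Sum.inl ⟨(u, v), huv⟩) (Sum.inr ()) (by simp) (fun hli => ?_)
        rw [linearIndependent_fin2] at hli
        refine hli.2 ((a u : ℚ)⁻¹) ?_
        funext i
        subst hA
        simp only [Matrix.cons_val_one, Matrix.head_cons, Matrix.cons_val_zero,
          Pi.smul_apply, smul_eq_mul, Matrix.of_apply, Sum.elim_inl, Sum.elim_inr, Dmat]
        have hau' : (a u : ℚ) ≠ 0 := Int.cast_ne_zero.mpr hau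
        by_cases hiu : i = u
        · subst hiu
          rw [if_pos rfl]
          push_cast
          rw [inv_mul_cancel₀ hau']
        · rw [if_neg hiu]
          by_cases hiv : i = v
          · subst hiv
            have : a i = -a u := by omega
            rw [if_pos rfl, this]
            push_cast
            field_simp
          · rw [if_neg hiv, hout i hiu hiv]
            simp
      rcases lt_or_gt_of_ne hij with hlt' | hgt'
      · exact key i j hlt' hsum2 hai hout
      · exact key j i hgt' (by omega) (by intro h; apply hai; omega)
          (fun k h1 h2 => hout k h2 h1)
  -- the positive part has sum at most 3
  set S : Finset (Fin (r+1)) := Finset.filter (fun i => 0 < a i) Finset.univ with hS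
  have hSne : S.Nonempty := by
    obtain ⟨i, hi⟩ := hpos_ex
    exact ⟨i, by rw [hS]; simp [hi]⟩
  have hTne : Sᶜ.Nonempty := by
    obtain ⟨i, hi⟩ := hneg_ex
    refine ⟨i, Finset.mem_compl.mpr ?_⟩
    rw [hS]; simp; omega
  have hSbound : |∑ i ∈ S, a i| ≤ 3 :=
    PCAux.subset_sum_bound r a A hA hmod S hSne hTne
  -- apply the classification
  have hfilter : Multiset.filter (fun x => 0 < x) (Multiset.map a K.val) =
      Multiset.map a S.val := by
    rw [Multiset.filter_map]
    congr 1
    have : Multiset.filter ((fun x => 0 < x) ∘ a) K.val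
        = (Finset.filter (fun i => 0 < a i) K).val := by
      rw [Finset.filter_val]; rfl
    rw [this]
    congr 1
    rw [hK, hS, Finset.filter_filter]
    ext i
    simp only [Finset.mem_filter, Finset.mem_univ, true_and]
    omega
  obtain ⟨ε, hε, hmem⟩ := PCAux.classify (Multiset.map a K.val)
    (by
      intro x hx
      obtain ⟨i, hi, rfl⟩ := Multiset.mem_map.mp hx
      rw [hK] at hi
      exact (Finset.mem_filter.mp (Finset.mem_val.mp hi)).2)
    hKsum
    (by rwa [Multiset.card_map])
    (by
      rw [hfilter]
      calc (Multiset.map a S.val).sum = ∑ i ∈ S, a i := rfl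
        _ ≤ |∑ i ∈ S, a i| := le_abs_self _
        _ ≤ 3 := hSbound)
  refine ⟨ε, hε, ?_⟩
  rw [Multiset.map_map] at hmem
  exact hmem
end

section
/- Let r ≥ 1 be an integer and let a, b ∈ ℤ^{r+1} be nonzero vectors with Σ a_i = Σ b_i = 0 and |supp(b)| ≤ r, such that a and b are not parallel to each other and neither a nor b is parallel to any column e_i − e_j of D_{r+1}. If every r×r submatrix of the matrix [D_{r+1} | a | b] has determinant of absolute value at most 3, then |supp(b) \ supp(a)| ≤ 2, every entry b_i with i ∈ supp(b) \ supp(a) equals 1 or −1, and if supp(b) \ supp(a) has exactly two elements then the two corresponding entries of b are 1 and −1 (they sum to 0). -/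
/-! ### auxiliary machinery -/

def sgn {n : ℕ} (i j : Fin n) : ℤ := if i < j then 1 else -1

def mkPair {n : ℕ} (i j : Fin n) (h : i ≠ j) : PairIdx n :=
  if hij : i < j then ⟨(i, j), hij⟩ else ⟨(j, i), by simp only; omega⟩

lemma sgn_pm {n : ℕ} (i j : Fin n) : sgn i j = 1 ∨ sgn i j = -1 := by
  unfold sgn; split <;> simp

lemma Dmat_mkPair {n : ℕ} (i j : Fin n) (h : i ≠ j) (x : Fin n) :
    Dmat n x (mkPair i j h) =
      sgn i j * ((if x = i then 1 else 0) - (if x = j then 1 else 0)) := by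
  unfold mkPair sgn Dmat
  split <;> (simp only [Matrix.of_apply]; split_ifs <;> simp_all <;> omega)

lemma mkPair_eq {n : ℕ} {i j i' j' : Fin n} (h : i ≠ j) (h' : i' ≠ j')
    (he : mkPair i j h = mkPair i' j' h') : (i = i' ∧ j = j') ∨ (i = j' ∧ j = i') := by
  unfold mkPair at he
  split_ifs at he <;> simp [Subtype.ext_iff, Prod.ext_iff] at he <;> tauto

section Abstract

variable {α β γ : Type} [Fintype α] [Fintype β] [Fintype γ]
  [DecidableEq α] [DecidableEq β] [DecidableEq γ]

def rootEntry (s : α ⊕ β ⊕ γ → ℤ) (e : α ⊕ β ⊕ γ) (t : Bool) : ℤ :=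
  Sum.elim (fun _ => cond t 0 (s e))
    (Sum.elim (fun _ => cond t (s e) 0) (fun _ => 0)) e

def Mstar (s : α ⊕ β ⊕ γ → ℤ) (a b : (α ⊕ β ⊕ γ) ⊕ Bool → ℤ) :
    Matrix ((α ⊕ β ⊕ γ) ⊕ Bool) ((α ⊕ β ⊕ γ) ⊕ Bool) ℤ :=
  Matrix.of fun x y =>
    Sum.elim
      (fun e => Sum.elim (fun v => if v = e then - s e else 0) (fun t => rootEntry s e t) x)
      (fun t => cond t (b x) (a x)) y

def sum1 (a : (α ⊕ β ⊕ γ) ⊕ Bool → ℤ) : ℤ :=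
  a (Sum.inr false) + ∑ v : α, a (Sum.inl (Sum.inl v))

def sum2 (a : (α ⊕ β ⊕ γ) ⊕ Bool → ℤ) : ℤ :=
  a (Sum.inr true) + ∑ w : β, a (Sum.inl (Sum.inr (Sum.inl w)))

def Tmat (a b : (α ⊕ β ⊕ γ) ⊕ Bool → ℤ) : Matrix Bool Bool ℤ :=
  Matrix.of fun t1 t2 =>
    cond t1 (cond t2 (sum2 (α := α) b) (sum2 a)) (cond t2 (sum1 b) (sum1 a))

lemma mstar_mul (s : α ⊕ β ⊕ γ → ℤ) (hs : ∀ e, s e * s e = 1)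
    (a b : (α ⊕ β ⊕ γ) ⊕ Bool → ℤ) :
    Mstar s a b *
      Matrix.fromBlocks 1 (Matrix.of fun e t => s e * (cond t (b (Sum.inl e)) (a (Sum.inl e)))) 0 1 =
    Matrix.fromBlocks (Matrix.diagonal fun e => - s e) 0
      (Matrix.of fun t e => rootEntry s e t) (Tmat a b) := by
  ext x y
  rcases y with e | t
  · have key : ∀ z, (Matrix.fromBlocks (1 : Matrix (α⊕β⊕γ) (α⊕β⊕γ) ℤ)
        (Matrix.of fun e t => s e * (cond t (b (Sum.inl e)) (a (Sum.inl e)))) 0 1) z (Sum.inl e)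
        = if z = (Sum.inl e : (α⊕β⊕γ)⊕Bool) then 1 else 0 := by
      rintro (e' | t') <;>
        simp [Matrix.fromBlocks, Matrix.one_apply, Sum.inl.injEq]
    rw [Matrix.mul_apply]
    simp only [key, mul_ite, mul_one, mul_zero]
    rw [Finset.sum_ite_eq' Finset.univ (Sum.inl e)]
    simp only [Finset.mem_univ, if_true]
    rcases x with v | t <;> simp [Mstar, Matrix.fromBlocks, Matrix.diagonal] <;>
      (try (split <;> simp_all))
  · rw [Matrix.mul_apply]
    rw [Fintype.sum_sum_type]
    have hright : ∀ t' : Bool, (Matrix.fromBlocks (1 : Matrix (α⊕β⊕γ) (α⊕β⊕γ) ℤ)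
        (Matrix.of fun e t => s e * (cond t (b (Sum.inl e)) (a (Sum.inl e)))) 0
        (1 : Matrix Bool Bool ℤ)) (Sum.inr t') (Sum.inr t)
        = if t' = t then 1 else 0 := by
      intro t'; simp [Matrix.fromBlocks, Matrix.one_apply]
    have hleft : ∀ e : α⊕β⊕γ, (Matrix.fromBlocks (1 : Matrix (α⊕β⊕γ) (α⊕β⊕γ) ℤ)
        (Matrix.of fun e' t => s e' * (cond t (b (Sum.inl e')) (a (Sum.inl e')))) 0
        (1 : Matrix Bool Bool ℤ)) (Sum.inl e) (Sum.inr t)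
        = s e * (cond t (b (Sum.inl e)) (a (Sum.inl e))) := by
      intro e; simp [Matrix.fromBlocks]
    simp only [hright, hleft, mul_ite, mul_one, mul_zero]
    rw [Finset.sum_ite_eq' Finset.univ t]
    simp only [Finset.mem_univ, if_true]
    rcases x with v | t'
    · rcases v with v | w | u <;>
        simp [Mstar, Matrix.fromBlocks, Fintype.sum_sum_type, rootEntry,
          Finset.sum_ite_eq', mul_comm] <;>
        rw [← mul_assoc, hs] <;> ring
    · cases t' <;> cases t <;>
      · simp [Mstar, Matrix.fromBlocks, Fintype.sum_sum_type, rootEntry, Tmat,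
          sum1, sum2, Finset.mul_sum, mul_comm, ← mul_assoc, hs] <;> ring

lemma mstar_det_abs (s : α ⊕ β ⊕ γ → ℤ) (hs : ∀ e, s e = 1 ∨ s e = -1)
    (a b : (α ⊕ β ⊕ γ) ⊕ Bool → ℤ) :
    |(Mstar s a b).det| = |sum1 a * sum2 b - sum1 b * sum2 a| := by
  have hs' : ∀ e, s e * s e = 1 := by
    intro e; rcases hs e with h | h <;> rw [h] <;> norm_num
  have hdetE : (Matrix.fromBlocks 1
      (Matrix.of fun e t => s e * (cond t (b (Sum.inl e)) (a (Sum.inl e)))) 0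
      (1 : Matrix Bool Bool ℤ)).det = 1 := by
    rw [Matrix.det_fromBlocks_zero₂₁]; simp
  have h1 : (Mstar s a b).det =
      (Matrix.fromBlocks (Matrix.diagonal fun e => - s e) 0
        (Matrix.of fun t e => rootEntry s e t) (Tmat a b)).det := by
    rw [← mstar_mul s hs' a b, Matrix.det_mul, hdetE, mul_one]
  have hdetT : (Tmat (α := α) (β := β) (γ := γ) a b).det
      = sum1 a * sum2 b - sum1 b * sum2 a := by
    rw [← Matrix.det_submatrix_equiv_self finTwoEquiv (Tmat a b), Matrix.det_fin_two]
    simp [Tmat, finTwoEquiv, sum1, sum2]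
  rw [h1, Matrix.det_fromBlocks_zero₁₂, abs_mul, Matrix.det_diagonal, hdetT]
  have : |∏ e : α ⊕ β ⊕ γ, -s e| = 1 := by
    rw [Finset.abs_prod]
    apply Finset.prod_eq_one
    intro e _
    rcases hs e with h | h <;> rw [h] <;> norm_num
  rw [this, one_mul]

end Abstract

section Setup

variable {n : ℕ} (S1 S2 : Finset (Fin n)) (c1 c2 k : Fin n)

abbrev IdxT : Type :=
  (↥(S1.erase c1) ⊕ ↥(S2.erase c2) ⊕ ↥(((S1 ∪ S2)ᶜ).erase k)) ⊕ Bool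

def VV : IdxT S1 S2 c1 c2 k → Fin n :=
  Sum.elim (Sum.elim (fun v => v.1) (Sum.elim (fun w => w.1) (fun u => u.1)))
    (fun t => cond t c2 c1)

variable {S1 S2 c1 c2 k}

lemma mem1 {x : Fin n} (h : x ∈ S1.erase c1) : x ∈ S1 ∧ x ≠ c1 :=
  ⟨Finset.mem_of_mem_erase h, Finset.ne_of_mem_erase h⟩

lemma mem3 {x : Fin n} (h : x ∈ ((S1 ∪ S2)ᶜ).erase k) : x ∉ S1 ∧ x ∉ S2 ∧ x ≠ k := by
  have h3 := Finset.mem_of_mem_erase h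
  rw [Finset.mem_compl, Finset.mem_union] at h3
  push_neg at h3
  exact ⟨h3.1, h3.2, Finset.ne_of_mem_erase h⟩

lemma VV_inj (hc1 : c1 ∈ S1) (hc2 : c2 ∈ S2) (hd : Disjoint S1 S2) :
    Function.Injective (VV S1 S2 c1 c2 k) := by
  have hd' : ∀ x : Fin n, x ∈ S1 → x ∉ S2 := fun x hx => Finset.disjoint_left.mp hd hx
  rintro ((⟨v,hv⟩|⟨w,hw⟩|⟨u,hu⟩)|t) ((⟨v',hv'⟩|⟨w',hw'⟩|⟨u',hu'⟩)|t') heq <;>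
    simp only [VV, Sum.elim_inl, Sum.elim_inr] at heq
  all_goals try (cases t <;> cases t' <;> simp_all)
  all_goals try (subst heq; rfl)
  all_goals exfalso
  all_goals try (cases t)
  all_goals try (cases t')
  all_goals try simp only [cond] at heq
  all_goals subst heq
  all_goals simp_all only [Finset.mem_erase, Finset.mem_compl, Finset.mem_union, not_or, ne_eq]
  all_goals tauto

variable (S1 S2 c1 c2 k)

def ssig : (↥(S1.erase c1) ⊕ ↥(S2.erase c2) ⊕ ↥(((S1 ∪ S2)ᶜ).erase k)) → ℤ :=
  Sum.elim (fun v => sgn c1 v.1) (Sum.elim (fun w => sgn c2 w.1) (fun u => sgn k u.1))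

def FF : IdxT S1 S2 c1 c2 k → PairIdx n ⊕ Bool :=
  Sum.elim (Sum.elim (fun v => Sum.inl (mkPair c1 v.1 (Ne.symm (mem1 v.2).2)))
    (Sum.elim (fun w => Sum.inl (mkPair c2 w.1 (Ne.symm (mem1 w.2).2)))
      (fun u => Sum.inl (mkPair k u.1 (Ne.symm (mem3 u.2).2.2)))))
    (fun t => Sum.inr t)

variable {S1 S2 c1 c2 k}

set_option maxHeartbeats 2000000 in
lemma FF_inj (hc1 : c1 ∈ S1) (hc2 : c2 ∈ S2) (hd : Disjoint S1 S2) (hk : k ∉ S1 ∪ S2) :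
    Function.Injective (FF S1 S2 c1 c2 k) := by
  have hd' : ∀ x : Fin n, x ∈ S1 → x ∉ S2 := fun x hx => Finset.disjoint_left.mp hd hx
  have hk1 : k ∉ S1 := fun h => hk (Finset.mem_union_left _ h)
  have hk2 : k ∉ S2 := fun h => hk (Finset.mem_union_right _ h)
  rintro ((⟨v,hv⟩|⟨w,hw⟩|⟨u,hu⟩)|t) ((⟨v',hv'⟩|⟨w',hw'⟩|⟨u',hu'⟩)|t') heq <;>
    simp only [FF, Sum.elim_inl, Sum.elim_inr, Sum.inl.injEq, Sum.inr.injEq] at heq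
  all_goals try (exact congrArg _ heq)
  all_goals try cases heq
  all_goals try rfl
  all_goals have hp := mkPair_eq _ _ heq
  all_goals clear heq
  all_goals rcases hp with ⟨h1, h2⟩ | ⟨h1, h2⟩
  all_goals try subst h1
  all_goals try subst h2
  all_goals simp_all only [Finset.mem_erase, Finset.mem_compl, Finset.mem_union, not_or, ne_eq]
  all_goals first
    | tauto
    | (exfalso; solve_by_elim [Finset.mem_of_mem_erase, hd'])

set_option maxHeartbeats 2000000 in
lemma submatrix_eq_mstar (hc1 : c1 ∈ S1) (hc2 : c2 ∈ S2) (hd : Disjoint S1 S2)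
    (hk : k ∉ S1 ∪ S2) (a b : Fin n → ℤ) :
    (Matrix.of fun i => Sum.elim (fun p => Dmat n i p) (fun t => if t then b i else a i)).submatrix
        (VV S1 S2 c1 c2 k) (FF S1 S2 c1 c2 k)
      = Mstar (ssig S1 S2 c1 c2 k) (a ∘ VV S1 S2 c1 c2 k) (b ∘ VV S1 S2 c1 c2 k) := by
  have hd' : ∀ x : Fin n, x ∈ S1 → x ∉ S2 := fun x hx => Finset.disjoint_left.mp hd hx
  have hk1 : k ∉ S1 := fun h => hk (Finset.mem_union_left _ h)
  have hk2 : k ∉ S2 := fun h => hk (Finset.mem_union_right _ h)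
  have L1c1 : ∀ x, x ∈ S1.erase c1 → x = c1 → False := fun x h e => (mem1 h).2 e
  have L1c2 : ∀ x, x ∈ S1.erase c1 → x = c2 → False := fun x h e =>
    hd' c2 (e ▸ (mem1 h).1) hc2
  have L1k : ∀ x, x ∈ S1.erase c1 → x = k → False := fun x h e =>
    hk1 (e ▸ (mem1 h).1)
  have L2c2 : ∀ x, x ∈ S2.erase c2 → x = c2 → False := fun x h e => (mem1 h).2 e
  have L2c1 : ∀ x, x ∈ S2.erase c2 → x = c1 → False := fun x h e =>
    hd' c1 hc1 (e ▸ (mem1 h).1)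
  have L2k : ∀ x, x ∈ S2.erase c2 → x = k → False := fun x h e =>
    hk2 (e ▸ (mem1 h).1)
  have L3c1 : ∀ x, x ∈ ((S1 ∪ S2)ᶜ).erase k → x = c1 → False := fun x h e =>
    (e ▸ (mem3 h).1) hc1
  have L3c2 : ∀ x, x ∈ ((S1 ∪ S2)ᶜ).erase k → x = c2 → False := fun x h e =>
    (e ▸ (mem3 h).2.1) hc2
  have L3k : ∀ x, x ∈ ((S1 ∪ S2)ᶜ).erase k → x = k → False := fun x h e => (mem3 h).2.2 e
  have L12 : ∀ x y, x ∈ S1.erase c1 → y ∈ S2.erase c2 → x = y → False := fun x y hx hy e =>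
    hd' y (e ▸ (mem1 hx).1) (mem1 hy).1
  have L21 : ∀ x y, x ∈ S2.erase c2 → y ∈ S1.erase c1 → x = y → False := fun x y hx hy e =>
    L12 y x hy hx e.symm
  have L13 : ∀ x y, x ∈ S1.erase c1 → y ∈ ((S1 ∪ S2)ᶜ).erase k → x = y → False :=
    fun x y hx hy e => (mem3 hy).1 (e ▸ (mem1 hx).1)
  have L31 : ∀ x y, x ∈ ((S1 ∪ S2)ᶜ).erase k → y ∈ S1.erase c1 → x = y → False :=
    fun x y hx hy e => L13 y x hy hx e.symm
  have L23 : ∀ x y, x ∈ S2.erase c2 → y ∈ ((S1 ∪ S2)ᶜ).erase k → x = y → False :=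
    fun x y hx hy e => (mem3 hy).2.1 (e ▸ (mem1 hx).1)
  have L32 : ∀ x y, x ∈ ((S1 ∪ S2)ᶜ).erase k → y ∈ S2.erase c2 → x = y → False :=
    fun x y hx hy e => L23 y x hy hx e.symm
  have Lc1G1 : ∀ y, y ∈ S1.erase c1 → c1 = y → False := fun y h e => L1c1 y h e.symm
  have Lc1G2 : ∀ y, y ∈ S2.erase c2 → c1 = y → False := fun y h e => L2c1 y h e.symm
  have Lc1G3 : ∀ y, y ∈ ((S1 ∪ S2)ᶜ).erase k → c1 = y → False := fun y h e => L3c1 y h e.symm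
  have Lc2G1 : ∀ y, y ∈ S1.erase c1 → c2 = y → False := fun y h e => L1c2 y h e.symm
  have Lc2G2 : ∀ y, y ∈ S2.erase c2 → c2 = y → False := fun y h e => L2c2 y h e.symm
  have Lc2G3 : ∀ y, y ∈ ((S1 ∪ S2)ᶜ).erase k → c2 = y → False := fun y h e => L3c2 y h e.symm
  have Lc1c2 : c1 = c2 → False := fun e => hd' c1 hc1 (e.symm ▸ hc2)
  have Lc2c1 : c2 = c1 → False := fun e => Lc1c2 e.symm
  have Lc1k : c1 = k → False := fun e => hk1 (e ▸ hc1)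
  have Lc2k : c2 = k → False := fun e => hk2 (e ▸ hc2)
  ext x y
  rcases y with (⟨v,hv⟩|⟨w,hw⟩|⟨u,hu⟩)|t
  pick_goal 4
  · rcases x with (⟨v',hv'⟩|⟨w',hw'⟩|⟨u',hu'⟩)|t' <;> cases t <;>
      simp [VV, FF, Mstar, Matrix.submatrix_apply]
  all_goals rcases x with (⟨v',hv'⟩|⟨w',hw'⟩|⟨u',hu'⟩)|t'
  all_goals try cases t'
  all_goals simp only [VV, FF, Mstar, Matrix.submatrix_apply, Matrix.of_apply, Sum.elim_inl,
      Sum.elim_inr, Dmat_mkPair, rootEntry, ssig, cond, Subtype.mk.injEq, Sum.inl.injEq,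
      Sum.inr.injEq]
  all_goals split_ifs
  all_goals try ring
  all_goals exfalso
  all_goals solve_by_elim [L1c1, L1c2, L1k, L2c2, L2c1, L2k, L3c1, L3c2, L3k, L12, L21, L13,
    L31, L23, L32, Lc1G1, Lc1G2, Lc1G3, Lc2G1, Lc2G2, Lc2G3, Lc1c2, Lc2c1, Lc1k, Lc2k]

end Setup

lemma key_bound (r : ℕ) (a b : Fin (r + 1) → ℤ)
    (A : Matrix (Fin (r + 1)) (PairIdx (r + 1) ⊕ Bool) ℤ)
    (hA : A = Matrix.of fun i =>
      Sum.elim (fun p => Dmat (r + 1) i p) (fun t => if t then b i else a i))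
    (hmod : ∀ (g : Fin r → Fin (r + 1)) (f : Fin r → PairIdx (r + 1) ⊕ Bool),
      Function.Injective g → Function.Injective f →
      |(A.submatrix g f).det| ≤ 3)
    (S1 S2 : Finset (Fin (r + 1))) (h1 : S1.Nonempty) (h2 : S2.Nonempty)
    (hd : Disjoint S1 S2) (hu : S1 ∪ S2 ≠ Finset.univ) :
    |(∑ i ∈ S1, a i) * (∑ i ∈ S2, b i) - (∑ i ∈ S1, b i) * (∑ i ∈ S2, a i)| ≤ 3 := by
  classical
  subst hA
  obtain ⟨c1, hc1⟩ := h1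
  obtain ⟨c2, hc2⟩ := h2
  obtain ⟨k, hk⟩ : ∃ k, k ∉ S1 ∪ S2 := by
    by_contra hcon
    push_neg at hcon
    exact hu (Finset.eq_univ_iff_forall.mpr hcon)
  have hkc : k ∈ (S1 ∪ S2)ᶜ := Finset.mem_compl.mpr hk
  have hcard : Fintype.card (IdxT S1 S2 c1 c2 k) = r := by
    have hlt : (S1 ∪ S2).card < r + 1 := by
      have := Finset.card_lt_card ((Finset.ssubset_univ_iff).mpr hu)
      simpa using this
    have h1c : 1 ≤ S1.card := Finset.card_pos.mpr ⟨c1, hc1⟩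
    have h2c : 1 ≤ S2.card := Finset.card_pos.mpr ⟨c2, hc2⟩
    rw [Finset.card_union_of_disjoint hd] at hlt
    simp only [IdxT, Fintype.card_sum, Fintype.card_coe, Fintype.card_bool,
      Finset.card_erase_of_mem hc1, Finset.card_erase_of_mem hc2,
      Finset.card_erase_of_mem hkc, Finset.card_compl, Fintype.card_fin,
      Finset.card_union_of_disjoint hd]
    omega
  have ψ : Fin r ≃ IdxT S1 S2 c1 c2 k :=
    Fintype.equivOfCardEq (by rw [Fintype.card_fin, hcard])
  have hg : Function.Injective (VV S1 S2 c1 c2 k ∘ ψ) :=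
    (VV_inj hc1 hc2 hd).comp ψ.injective
  have hf : Function.Injective (FF S1 S2 c1 c2 k ∘ ψ) :=
    (FF_inj hc1 hc2 hd hk).comp ψ.injective
  have hb3 := hmod _ _ hg hf
  rw [← Matrix.submatrix_submatrix] at hb3
  rw [Matrix.det_submatrix_equiv_self ψ] at hb3
  rw [submatrix_eq_mstar hc1 hc2 hd hk a b] at hb3
  have hss : ∀ e, ssig S1 S2 c1 c2 k e = 1 ∨ ssig S1 S2 c1 c2 k e = -1 := by
    rintro (v | w | u) <;> simp [ssig] <;> apply sgn_pm
  rw [mstar_det_abs _ hss] at hb3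
  have e1 : sum1 (a ∘ VV S1 S2 c1 c2 k) = ∑ i ∈ S1, a i := by
    simp only [sum1, Function.comp_apply, VV, Sum.elim_inr, Sum.elim_inl, cond]
    rw [Finset.sum_coe_sort (S1.erase c1) a]
    exact Finset.add_sum_erase _ a hc1
  have e2 : sum2 (a ∘ VV S1 S2 c1 c2 k) = ∑ i ∈ S2, a i := by
    simp only [sum2, Function.comp_apply, VV, Sum.elim_inr, Sum.elim_inl, cond]
    rw [Finset.sum_coe_sort (S2.erase c2) a]
    exact Finset.add_sum_erase _ a hc2
  have e1b : sum1 (b ∘ VV S1 S2 c1 c2 k) = ∑ i ∈ S1, b i := by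
    simp only [sum1, Function.comp_apply, VV, Sum.elim_inr, Sum.elim_inl, cond]
    rw [Finset.sum_coe_sort (S1.erase c1) b]
    exact Finset.add_sum_erase _ b hc1
  have e2b : sum2 (b ∘ VV S1 S2 c1 c2 k) = ∑ i ∈ S2, b i := by
    simp only [sum2, Function.comp_apply, VV, Sum.elim_inr, Sum.elim_inl, cond]
    rw [Finset.sum_coe_sort (S2.erase c2) b]
    exact Finset.add_sum_erase _ b hc2
  rw [e1, e2, e1b, e2b] at hb3
  exact hb3

theorem support_of_second_column (r : ℕ) (hr : 1 ≤ r) (a b : Fin (r + 1) → ℤ)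
    (ha : a ≠ 0) (hb : b ≠ 0)
    (hsuma : ∑ i, a i = 0) (hsumb : ∑ i, b i = 0)
    (hsuppb : (Finset.filter (fun i => b i ≠ 0) Finset.univ).card ≤ r)
    (hab : ¬ IntParallel a b)
    (haD : ∀ p : PairIdx (r + 1), ¬ IntParallel a (fun i => Dmat (r + 1) i p))
    (hbD : ∀ p : PairIdx (r + 1), ¬ IntParallel b (fun i => Dmat (r + 1) i p))
    (A : Matrix (Fin (r + 1)) (PairIdx (r + 1) ⊕ Bool) ℤ)
    (hA : A = Matrix.of fun i =>
      Sum.elim (fun p => Dmat (r + 1) i p) (fun t => if t then b i else a i))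
    (hmod : ∀ (g : Fin r → Fin (r + 1)) (f : Fin r → PairIdx (r + 1) ⊕ Bool),
      Function.Injective g → Function.Injective f →
      |(A.submatrix g f).det| ≤ 3) :
    (Finset.filter (fun i => b i ≠ 0 ∧ a i = 0) Finset.univ).card ≤ 2 ∧
    (∀ i, b i ≠ 0 → a i = 0 → b i = 1 ∨ b i = -1) ∧
    ((Finset.filter (fun i => b i ≠ 0 ∧ a i = 0) Finset.univ).card = 2 →
      ∑ i ∈ Finset.filter (fun i => b i ≠ 0 ∧ a i = 0) Finset.univ, b i = 0) := by
  classical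
  set P : Finset (Fin (r + 1)) := Finset.filter (fun i => 0 < a i) Finset.univ with hPdef
  set N : Finset (Fin (r + 1)) := Finset.filter (fun i => a i < 0) Finset.univ with hNdef
  have hPmem : ∀ i, i ∈ P ↔ 0 < a i := by intro i; simp [hPdef]
  have hNmem : ∀ i, i ∈ N ↔ a i < 0 := by intro i; simp [hNdef]
  -- the sums over P and N cancel
  have hsumPN : ∑ i ∈ P, a i + ∑ i ∈ N, a i = 0 := by
    have hs := Finset.sum_filter_add_sum_filter_not Finset.univ (fun i => 0 < a i) a
    rw [hsuma] at hs
    rw [← hPdef] at hs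
    have hNsub : N ⊆ Finset.filter (fun i => ¬ 0 < a i) Finset.univ := by
      intro x hx; simp only [Finset.mem_filter, Finset.mem_univ, true_and] at *
      rw [hNmem] at hx; omega
    have heq : ∑ i ∈ Finset.filter (fun i => ¬ 0 < a i) Finset.univ, a i = ∑ i ∈ N, a i := by
      rw [← Finset.sum_subset hNsub]
      intro x _ hxn
      rw [hNmem] at hxn
      simp only [Finset.mem_filter, Finset.mem_univ, true_and] at *
      omega
    omega
  have hNne : N.Nonempty := by
    obtain ⟨i, hi⟩ : ∃ i, a i ≠ 0 := by
      by_contra hcon; push_neg at hcon; exact ha (funext hcon)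
    rcases lt_or_gt_of_ne hi with h | h
    · exact ⟨i, (hNmem i).mpr h⟩
    · have hPpos : 0 < ∑ i ∈ P, a i := by
        have : ∀ j ∈ P, 0 < a j := fun j hj => (hPmem j).mp hj
        exact Finset.sum_pos this ⟨i, (hPmem i).mpr h⟩
      apply Finset.nonempty_of_sum_ne_zero (f := a)
      intro h0
      rw [h0] at hsumPN
      omega
  have hPne : P.Nonempty := by
    obtain ⟨j, hj⟩ := hNne
    have hNneg : ∑ i ∈ N, a i < 0 := by
      have : ∀ j ∈ N, a j < 0 := fun j hj => (hNmem j).mp hj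
      exact Finset.sum_neg this ⟨j, hj⟩
    apply Finset.nonempty_of_sum_ne_zero (f := a)
    intro h0
    rw [h0] at hsumPN
    omega
  have hP1 : (P.card : ℤ) ≤ ∑ i ∈ P, a i := by
    calc (P.card : ℤ) = ∑ _i ∈ P, (1 : ℤ) := by simp
    _ ≤ ∑ i ∈ P, a i := Finset.sum_le_sum (fun i hi => (hPmem i).mp hi)
  have hN1 : ∑ i ∈ N, a i ≤ -(N.card : ℤ) := by
    calc ∑ i ∈ N, a i ≤ ∑ _i ∈ N, (-1 : ℤ) :=
          Finset.sum_le_sum (fun i hi => by have := (hNmem i).mp hi; omega)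
    _ = -(N.card : ℤ) := by simp
  have hPsum2 : 2 ≤ ∑ i ∈ P, a i := by
    by_contra hcon
    push_neg at hcon
    have hcardP : 1 ≤ (P.card : ℤ) := by exact_mod_cast Finset.card_pos.mpr hPne
    have hcardN : 1 ≤ (N.card : ℤ) := by exact_mod_cast Finset.card_pos.mpr hNne
    have hPsum1 : ∑ i ∈ P, a i = 1 := by omega
    have hNsum1 : ∑ i ∈ N, a i = -1 := by omega
    have hcardP1 : P.card = 1 := by omega
    have hcardN1 : N.card = 1 := by omega
    obtain ⟨i0, hi0⟩ := Finset.card_eq_one.mp hcardP1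
    obtain ⟨j0, hj0⟩ := Finset.card_eq_one.mp hcardN1
    have hai0 : a i0 = 1 := by
      have := hPsum1; rw [hi0, Finset.sum_singleton] at this; exact this
    have haj0 : a j0 = -1 := by
      have := hNsum1; rw [hj0, Finset.sum_singleton] at this; exact this
    have hne : i0 ≠ j0 := by intro h; rw [h, haj0] at hai0; omega
    have haform : ∀ x, a x = if x = i0 then 1 else if x = j0 then -1 else 0 := by
      intro x
      by_cases hx1 : x = i0
      · rw [if_pos hx1, hx1, hai0]
      · by_cases hx2 : x = j0
        · rw [if_neg hx1, if_pos hx2, hx2, haj0]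
        · rw [if_neg hx1, if_neg hx2]
          have hxP : x ∉ P := by rw [hi0]; simp [hx1]
          have hxN : x ∉ N := by rw [hj0]; simp [hx2]
          rw [hPmem] at hxP; rw [hNmem] at hxN
          omega
    apply haD (mkPair i0 j0 hne)
    intro hli
    have h2 := (linearIndependent_fin2.mp hli).2 ((sgn i0 j0 : ℤ) : ℚ)
    apply h2
    funext x
    simp only [Matrix.cons_val_one, Matrix.head_cons, Matrix.cons_val_zero, Pi.smul_apply,
      smul_eq_mul]
    rw [Dmat_mkPair i0 j0 hne x, haform x]
    rcases sgn_pm i0 j0 with hsg | hsg <;> rw [hsg] <;> push_cast <;> split_ifs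
    all_goals try norm_num
    all_goals (rename_i hx1 hx2; exact absurd (hx1.symm.trans hx2) hne)
  obtain ⟨j0, hj0N⟩ := hNne
  have haj0 : a j0 < 0 := (hNmem j0).mp hj0N
  have hPdisj0 : j0 ∉ P := by rw [hPmem]; omega
  have keyA : ∀ i, a i = 0 → b i ≠ 0 → b i = 1 ∨ b i = -1 := by
    intro i hai hbi
    have hiP : i ∉ P := by rw [hPmem]; omega
    have hij0 : j0 ≠ i := by intro h; rw [h] at haj0; omega
    have hd : Disjoint {i} P := by simp [Finset.disjoint_left, hiP]
    have hu : {i} ∪ P ≠ Finset.univ := by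
      intro h
      have : j0 ∈ {i} ∪ P := by rw [h]; exact Finset.mem_univ _
      rw [Finset.mem_union, Finset.mem_singleton] at this
      rcases this with h' | h'
      · exact hij0 h'
      · exact hPdisj0 h'
    have hkb := key_bound r a b A hA hmod {i} P ⟨i, Finset.mem_singleton_self i⟩ hPne hd hu
    rw [Finset.sum_singleton, Finset.sum_singleton, hai] at hkb
    simp only [zero_mul, zero_sub, abs_neg, abs_mul] at hkb
    have hPa : |∑ i ∈ P, a i| = ∑ i ∈ P, a i := abs_of_nonneg (by omega)
    rw [hPa] at hkb
    have habs : |b i| = 1 := by nlinarith [abs_nonneg (b i), abs_pos.mpr hbi]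
    rcases (abs_eq (by norm_num : (0:ℤ) ≤ 1)).mp habs with h | h
    · left; exact h
    · right; exact h
  have keyB : ∀ i j, i ≠ j → a i = 0 → a j = 0 → b i ≠ 0 → b j ≠ 0 → b i + b j = 0 := by
    intro i j hij hai haj hbi hbj
    have hiP : i ∉ P := by rw [hPmem]; omega
    have hjP : j ∉ P := by rw [hPmem]; omega
    have hij0 : j0 ≠ i := by intro h; rw [h] at haj0; omega
    have hjj0 : j0 ≠ j := by intro h; rw [h] at haj0; omega
    have hd : Disjoint ({i, j} : Finset (Fin (r+1))) P := by
      rw [Finset.disjoint_left]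
      intro x hx
      rw [Finset.mem_insert, Finset.mem_singleton] at hx
      rcases hx with h | h <;> subst h <;> assumption
    have hu : ({i, j} : Finset (Fin (r+1))) ∪ P ≠ Finset.univ := by
      intro h
      have : j0 ∈ ({i, j} : Finset (Fin (r+1))) ∪ P := by rw [h]; exact Finset.mem_univ _
      rw [Finset.mem_union, Finset.mem_insert, Finset.mem_singleton] at this
      rcases this with (h' | h') | h'
      · exact hij0 h'
      · exact hjj0 h'
      · exact hPdisj0 h'
    have hkb := key_bound r a b A hA hmod {i, j} P ⟨i, Finset.mem_insert_self i _⟩ hPne hd hu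
    rw [Finset.sum_pair hij, Finset.sum_pair hij, hai, haj] at hkb
    simp only [add_zero, zero_mul, zero_sub, abs_neg, abs_mul] at hkb
    have hPa : |∑ i ∈ P, a i| = ∑ i ∈ P, a i := abs_of_nonneg (by omega)
    rw [hPa] at hkb
    have habs : |b i + b j| ≤ 1 := by nlinarith [abs_nonneg (b i + b j)]
    rcases keyA i hai hbi with h1 | h1 <;> rcases keyA j haj hbj with h2 | h2 <;>
      rw [h1, h2] at habs ⊢ <;> simp_all <;> omega
  refine ⟨?_, fun i hbi hai => keyA i hai hbi, ?_⟩
  · by_contra hcon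
    push_neg at hcon
    rw [Finset.two_lt_card_iff] at hcon
    obtain ⟨i, j, l, hi, hj, hl, hij, hil, hjl⟩ := hcon
    simp only [Finset.mem_filter, Finset.mem_univ, true_and] at hi hj hl
    have e1 := keyB i j hij hi.2 hj.2 hi.1 hj.1
    have e2 := keyB i l hil hi.2 hl.2 hi.1 hl.1
    have e3 := keyB j l hjl hj.2 hl.2 hj.1 hl.1
    have : b i = 0 := by omega
    exact hi.1 this
  · intro hcard
    obtain ⟨i, j, hij, hQ⟩ := Finset.card_eq_two.mp hcard
    have hi : i ∈ Finset.filter (fun i => b i ≠ 0 ∧ a i = 0) Finset.univ := by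
      rw [hQ]; exact Finset.mem_insert_self i _
    have hj : j ∈ Finset.filter (fun i => b i ≠ 0 ∧ a i = 0) Finset.univ := by
      rw [hQ]; exact Finset.mem_insert_of_mem (Finset.mem_singleton_self j)
    simp only [Finset.mem_filter, Finset.mem_univ, true_and] at hi hj
    rw [hQ, Finset.sum_pair hij]
    exact keyB i j hij hi.2 hj.2 hi.1 hj.1
end

section
/- Let Δ ≥ 2 be an integer, let λ = (λ_1 ≥ … ≥ λ_m) be a partition of Δ−1, and let r ≥ m+1 be an integer. Then the matrix A(Δ,λ,r) is Δ-modular: every r×r submatrix of A(Δ,λ,r) has determinant of absolute value at most Δ. -/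
set_option linter.unusedSectionVars false

/-- Column index type for the matrix `A(Δ, λ, r)`:
unit columns, difference columns, columns `k e_1 + e_{i+1}`, and
columns `k e_1 + e_{i+1} - e_j` with `j ∉ {1, i+1}` (0-based: `j ∉ {0, i+1}`). -/
abbrev ColIdxLam (m r : ℕ) (lam : Fin m → ℕ) :=
  Fin r ⊕ PairIdx r ⊕ (Σ i : Fin m, Fin (lam i)) ⊕
    (Σ i : Fin m, Fin (lam i) × {j : Fin r // j.val ≠ 0 ∧ j.val ≠ i.val + 1})

/-- The matrix `A(Δ, λ, r)` (with `λ` given as `lam : Fin m → ℕ`, the value `k ∈ [λ_i]`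
represented by `k : Fin (lam i)` standing for `k+1`). -/
def ALam (m r : ℕ) (lam : Fin m → ℕ) : Matrix (Fin r) (ColIdxLam m r lam) ℤ :=
  Matrix.of fun t j =>
    match j with
    | Sum.inl i => if t = i then 1 else 0
    | Sum.inr (Sum.inl p) => if t = p.val.1 then 1 else if t = p.val.2 then -1 else 0
    | Sum.inr (Sum.inr (Sum.inl ⟨i, k⟩)) =>
        if t.val = 0 then (k.val + 1 : ℤ) else if t.val = i.val + 1 then 1 else 0
    | Sum.inr (Sum.inr (Sum.inr ⟨i, k, j⟩)) =>
        if t.val = 0 then (k.val + 1 : ℤ) else if t.val = i.val + 1 then 1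
        else if t.val = j.val.val then -1 else 0
set_option maxHeartbeats 1000000

namespace DeltaMod

def GoodCol {V κ : Type} [DecidableEq V] (M : Matrix (Option V) κ ℤ) (c : κ)
    (lo ka : Option V → ℤ) : Prop :=
  ∃ h t : Option V, ∃ a b : ℤ,
    (∀ v : V, M (some v) c =
      (if (some v : Option V) = h then 1 else 0) - (if (some v : Option V) = t then 1 else 0)) ∧
    M none c = a - b ∧ lo h ≤ a ∧ a ≤ lo h + ka h ∧ lo t ≤ b ∧ b ≤ lo t + ka t

variable {V : Type} [DecidableEq V]

def emb (s : V) : Option {v : V // v ≠ s} → Option V := Option.map Subtype.val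

def mu (s : V) : Option V → Option {v : V // v ≠ s}
  | none => none
  | some v => if h : v = s then none else some ⟨v, h⟩

lemma emb_ne (s : V) (o : Option {v : V // v ≠ s}) : emb s o ≠ some s := by
  cases o with
  | none => simp [emb]
  | some w => simpa [emb] using w.property

lemma emb_mu (s : V) {x : Option V} (hx : x ≠ some s) : emb s (mu s x) = x := by
  cases x with
  | none => rfl
  | some v =>
      have hv : v ≠ s := fun h => hx (by rw [h])
      simp [mu, emb, hv]

lemma mu_emb (s : V) (o : Option {v : V // v ≠ s}) : mu s (emb s o) = o := by
  cases o with
  | none => rfl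
  | some w => simp [mu, emb, w.property]

lemma indK (s : V) (w : {v : V // v ≠ s}) {x : Option V} (hx : x ≠ some s) :
    ((some w.val : Option V) = x) ↔ ((some w : Option {v : V // v ≠ s}) = mu s x) := by
  constructor
  · rintro rfl
    rw [show (some w.val : Option V) = emb s (some w) from rfl, mu_emb]
  · intro h
    have := congrArg (emb s) h
    rw [emb_mu s hx] at this
    exact this

def elemEquiv {α : Type} [DecidableEq α] (a : α) : {x : α // x ≠ a} ⊕ Unit ≃ α where
  toFun := Sum.elim Subtype.val (fun _ => a)
  invFun x := if h : x = a then Sum.inr () else Sum.inl ⟨x, h⟩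
  left_inv := by
    rintro (⟨x, hx⟩ | ⟨⟩)
    · simp [hx]
    · simp
  right_inv := by
    intro x
    by_cases h : x = a <;> simp [h]

def optionNeEquiv (s : V) : Option {v : V // v ≠ s} ≃ {x : Option V // x ≠ some s} where
  toFun o := ⟨emb s o, emb_ne s o⟩
  invFun x := mu s x.val
  left_inv o := mu_emb s o
  right_inv x := Subtype.ext (emb_mu s x.property)

lemma card_ne {α : Type} [DecidableEq α] [Fintype α] (a : α) :
    Fintype.card {x : α // x ≠ a} + 1 = Fintype.card α := by
  classical
  have := Fintype.card_congr (elemEquiv a)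
  simpa using this

lemma step {V : Type} [Fintype V] [DecidableEq V] (s : V)
    (IH : ∀ (N : Matrix (Option {v : V // v ≠ s}) (Option {v : V // v ≠ s}) ℤ)
      (lo ka : Option {v : V // v ≠ s} → ℤ), (∀ o, 0 ≤ ka o) →
      (∀ c, GoodCol N c lo ka) → |N.det| ≤ ∑ o, ka o)
    (M : Matrix (Option V) (Option V) ℤ) (lo ka : Option V → ℤ) (hka : ∀ o, 0 ≤ ka o)
    (hM : ∀ c, GoodCol M c lo ka)
    (p : Option V) (hp : M (some s) p = 1) :
    |M.det| ≤ ∑ o : Option V, ka o := by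
  classical
  obtain ⟨hp', tp, ap, bp, hprow, hpnone, hpa1, hpa2, hpb1, hpb2⟩ := hM p
  have hs_entry := hprow s
  rw [hp] at hs_entry
  have hhp : hp' = some s := by
    by_cases h1 : (some s : Option V) = hp'
    · exact h1.symm
    · exfalso
      rw [if_neg h1] at hs_entry
      by_cases h2 : (some s : Option V) = tp
      · rw [if_pos h2] at hs_entry; omega
      · rw [if_neg h2] at hs_entry; omega
  subst hhp
  have htp : tp ≠ some s := by
    intro h
    rw [if_pos rfl, if_pos h.symm] at hs_entry
    simp at hs_entry
  -- column elimination
  set u : Option V → ℤ := fun c => if c = p then 0 else -M (some s) c with hu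
  set M₁ : Matrix (Option V) (Option V) ℤ := Matrix.of (fun i c => M i c + u c * M i p) with hM₁
  have hdet1 : M₁.det = M.det := by
    rw [← Matrix.det_transpose M₁, ← Matrix.det_transpose M]
    refine Matrix.det_eq_of_forall_row_eq_smul_add_const u p (by simp [hu]) ?_
    intro i j
    simp [hM₁, Matrix.transpose_apply]
  have hrow1 : ∀ c, M₁ (some s) c = if c = p then 1 else 0 := by
    intro c
    by_cases h : c = p
    · simp [hM₁, hu, h, hp]
    · simp only [hM₁, hu, Matrix.of_apply, if_neg h, hp]
      ring
  have hcolp : ∀ i, M₁ i p = M i p := by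
    intro i; simp [hM₁, hu]
  -- the column equivalence
  have hcard : Fintype.card (Option {v : V // v ≠ s}) = Fintype.card {c : Option V // c ≠ p} := by
    have h1 := card_ne (α := Option V) (some s)
    have h2 := card_ne (α := Option V) p
    have h3 := Fintype.card_congr (optionNeEquiv s)
    omega
  let cE : Option {v : V // v ≠ s} ≃ {c : Option V // c ≠ p} := Fintype.equivOfCardEq hcard
  set colemb : Option {v : V // v ≠ s} → Option V := fun o => (cE o).val with hcolemb
  have hcol_ne : ∀ o, colemb o ≠ p := fun o => (cE o).property
  -- block decomposition
  set rowe : Option {v : V // v ≠ s} ⊕ Unit ≃ Option V :=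
    (Equiv.sumCongr (optionNeEquiv s) (Equiv.refl Unit)).trans (elemEquiv (some s)) with hrowe
  set cole : Option {v : V // v ≠ s} ⊕ Unit ≃ Option V :=
    (Equiv.sumCongr cE (Equiv.refl Unit)).trans (elemEquiv p) with hcole
  set N : Matrix (Option {v : V // v ≠ s}) (Option {v : V // v ≠ s}) ℤ :=
    Matrix.of (fun i j => M₁ (emb s i) (colemb j)) with hN
  have hblock : M₁.submatrix rowe cole =
      Matrix.fromBlocks N (Matrix.of (fun i (_ : Unit) => M₁ (emb s i) p)) 0 1 := by
    ext i j
    rcases i with i | i <;> rcases j with j | j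
    · rfl
    · rfl
    · show M₁ (some s) (colemb j) = (0 : Matrix Unit (Option {v : V // v ≠ s}) ℤ) i j
      rw [hrow1, if_neg (hcol_ne j)]
      simp
    · show M₁ (some s) p = (1 : Matrix Unit Unit ℤ) i j
      rw [hcolp, hp]
      simp [Matrix.one_apply]
  have hdet2 : |M.det| = |N.det| := by
    have h1 : |(M₁.submatrix rowe cole).det| = |M₁.det| :=
      Matrix.abs_det_submatrix_equiv_equiv rowe cole M₁
    rw [hblock, Matrix.det_fromBlocks_zero₂₁, Matrix.det_one, mul_one] at h1
    rw [← hdet1, ← h1]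
  -- new interval data
  have hembτ : emb s (mu s tp) = tp := emb_mu s htp
  set ka' : Option {v : V // v ≠ s} → ℤ :=
    fun o => ka (emb s o) + if emb s o = tp then ka (some s) else 0 with hka'
  set lo' : Option {v : V // v ≠ s} → ℤ :=
    fun o => if emb s o = tp then min (lo tp) (lo (some s) + (bp - ap)) else lo (emb s o) with hlo'
  have hka'0 : ∀ o, 0 ≤ ka' o := by
    intro o
    by_cases h : emb s o = tp <;> simp only [hka', h, if_pos, if_neg, if_true, if_false]
    · exact add_nonneg (hka _) (by simp [hka _])
    · simpa using hka _
  have L1 : ∀ x : Option V, x ≠ some s → ∀ a : ℤ, lo x ≤ a → a ≤ lo x + ka x →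
      lo' (mu s x) ≤ a ∧ a ≤ lo' (mu s x) + ka' (mu s x) := by
    intro x hx a h1 h2
    have hembx : emb s (mu s x) = x := emb_mu s hx
    by_cases hxt : x = tp
    · have e1 : lo' (mu s x) = min (lo tp) (lo (some s) + (bp - ap)) := by
        simp only [hlo']
        rw [hembx, if_pos hxt]
      have e2 : ka' (mu s x) = ka x + ka (some s) := by
        simp only [hka']
        rw [hembx, if_pos hxt]
      rw [e1, e2]
      subst hxt
      constructor
      · exact le_trans (min_le_left _ _) h1
      · rcases le_total (lo x) (lo (some s) + (bp - ap)) with h | h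
        · rw [min_eq_left h]; linarith [hka (some s)]
        · rw [min_eq_right h]; linarith [hpb1, hpa2]
    · have e1 : lo' (mu s x) = lo x := by
        simp only [hlo']
        rw [hembx, if_neg hxt]
      have e2 : ka' (mu s x) = ka x := by
        simp only [hka']
        rw [hembx, if_neg hxt, add_zero]
      rw [e1, e2]
      exact ⟨h1, by linarith⟩
  have L2 : ∀ a : ℤ, lo (some s) ≤ a → a ≤ lo (some s) + ka (some s) →
      lo' (mu s tp) ≤ a + (bp - ap) ∧ a + (bp - ap) ≤ lo' (mu s tp) + ka' (mu s tp) := by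
    intro a h1 h2
    have e1 : lo' (mu s tp) = min (lo tp) (lo (some s) + (bp - ap)) := by
      simp only [hlo']
      rw [hembτ, if_pos rfl]
    have e2 : ka' (mu s tp) = ka tp + ka (some s) := by
      simp only [hka']
      rw [hembτ, if_pos rfl]
    rw [e1, e2]
    constructor
    · exact le_trans (min_le_right _ _) (by linarith)
    · rcases le_total (lo tp) (lo (some s) + (bp - ap)) with h | h
      · rw [min_eq_left h]; linarith [hpa1, hpb2]
      · rw [min_eq_right h]; linarith
  -- goodness of the reduced matrix
  have hGoodN : ∀ j, GoodCol N j lo' ka' := by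
    intro j
    obtain ⟨hc, tc, ac, bc, hrows, hnone, ha1, ha2, hb1, hb2⟩ := hM (colemb j)
    have hpne := hcol_ne j
    have hsentry : M (some s) (colemb j) =
        (if (some s : Option V) = hc then 1 else 0) -
        (if (some s : Option V) = tc then 1 else 0) := hrows s
    have hNrow : ∀ w : {v : V // v ≠ s}, N (some w) j =
        M (some w.val) (colemb j) - M (some s) (colemb j) * M (some w.val) p := by
      intro w
      show M (some w.val) (colemb j) + u (colemb j) * M (some w.val) p = _
      rw [hu]
      simp only [if_neg hpne]
      ring
    have hNnone : N none j = M none (colemb j) - M (some s) (colemb j) * M none p := by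
      show M none (colemb j) + u (colemb j) * M none p = _
      rw [hu]; simp only [if_neg hpne]; ring
    have hMwp : ∀ w : {v : V // v ≠ s},
        M (some w.val) p = -(if (some w.val : Option V) = tp then 1 else 0) := by
      intro w
      rw [hprow w.val, if_neg (show ¬(some w.val : Option V) = some s by simp [w.property])]
      ring
    by_cases hcs : hc = some s <;> by_cases hts : tc = some s
    · -- both endpoints were s : loop
      have hzero : M (some s) (colemb j) = 0 := by
        rw [hsentry, if_pos hcs.symm, if_pos hts.symm]; ring
      have ha1' : lo (some s) ≤ ac := by rw [← hcs]; exact ha1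
      have ha2' : ac ≤ lo (some s) + ka (some s) := by rw [← hcs]; exact ha2
      have hb1' : lo (some s) ≤ bc := by rw [← hts]; exact hb1
      have hb2' : bc ≤ lo (some s) + ka (some s) := by rw [← hts]; exact hb2
      refine ⟨mu s tp, mu s tp, ac + (bp - ap), bc + (bp - ap), ?_, ?_,
        (L2 ac ha1' ha2').1, (L2 ac ha1' ha2').2,
        (L2 bc hb1' hb2').1, (L2 bc hb1' hb2').2⟩
      · intro w
        rw [hNrow w, hzero, hrows w.val]
        have g1 : (if (some w.val : Option V) = hc then (1:ℤ) else 0) = 0 :=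
          if_neg (by rw [hcs]; simp [w.property])
        have g1' : (if (some w.val : Option V) = tc then (1:ℤ) else 0) = 0 :=
          if_neg (by rw [hts]; simp [w.property])
        rw [g1, g1']
        ring
      · rw [hNnone, hzero, hnone]
        ring
    · -- head was s
      have hone : M (some s) (colemb j) = 1 := by
        rw [hsentry, if_pos hcs.symm, if_neg (fun h => hts h.symm)]
        ring
      have ha1' : lo (some s) ≤ ac := by rw [← hcs]; exact ha1
      have ha2' : ac ≤ lo (some s) + ka (some s) := by rw [← hcs]; exact ha2
      refine ⟨mu s tp, mu s tc, ac + (bp - ap), bc, ?_, ?_, (L2 ac ha1' ha2').1,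
        (L2 ac ha1' ha2').2, (L1 tc hts bc hb1 hb2).1, (L1 tc hts bc hb1 hb2).2⟩
      · intro w
        rw [hNrow w, hone, hrows w.val, hMwp w]
        have g1 : (if (some w.val : Option V) = hc then (1:ℤ) else 0) = 0 :=
          if_neg (by rw [hcs]; simp [w.property])
        have g2 : (if (some w.val : Option V) = tc then (1:ℤ) else 0)
            = (if some w = mu s tc then 1 else 0) := if_congr (indK s w hts) rfl rfl
        have g3 : (if (some w.val : Option V) = tp then (1:ℤ) else 0)
            = (if some w = mu s tp then 1 else 0) := if_congr (indK s w htp) rfl rfl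
        rw [g1, g2, g3]
        ring
      · rw [hNnone, hone, hnone, hpnone]
        ring
    · -- tail was s
      have hmone : M (some s) (colemb j) = -1 := by
        rw [hsentry, if_neg (fun h => hcs h.symm), if_pos hts.symm]
        ring
      have hb1' : lo (some s) ≤ bc := by rw [← hts]; exact hb1
      have hb2' : bc ≤ lo (some s) + ka (some s) := by rw [← hts]; exact hb2
      refine ⟨mu s hc, mu s tp, ac, bc + (bp - ap), ?_, ?_, (L1 hc hcs ac ha1 ha2).1,
        (L1 hc hcs ac ha1 ha2).2, (L2 bc hb1' hb2').1, (L2 bc hb1' hb2').2⟩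
      · intro w
        rw [hNrow w, hmone, hrows w.val, hMwp w]
        have g1 : (if (some w.val : Option V) = tc then (1:ℤ) else 0) = 0 :=
          if_neg (by rw [hts]; simp [w.property])
        have g2 : (if (some w.val : Option V) = hc then (1:ℤ) else 0)
            = (if some w = mu s hc then 1 else 0) := if_congr (indK s w hcs) rfl rfl
        have g3 : (if (some w.val : Option V) = tp then (1:ℤ) else 0)
            = (if some w = mu s tp then 1 else 0) := if_congr (indK s w htp) rfl rfl
        rw [g1, g2, g3]
        ring
      · rw [hNnone, hmone, hnone, hpnone]
        ring
    · -- neither endpoint was s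
      have hzero : M (some s) (colemb j) = 0 := by
        rw [hsentry, if_neg (fun h => hcs h.symm), if_neg (fun h => hts h.symm)]
        ring
      refine ⟨mu s hc, mu s tc, ac, bc, ?_, ?_, (L1 hc hcs ac ha1 ha2).1,
        (L1 hc hcs ac ha1 ha2).2, (L1 tc hts bc hb1 hb2).1, (L1 tc hts bc hb1 hb2).2⟩
      · intro w
        rw [hNrow w, hzero, hrows w.val]
        have g2 : (if (some w.val : Option V) = hc then (1:ℤ) else 0)
            = (if some w = mu s hc then 1 else 0) := if_congr (indK s w hcs) rfl rfl
        have g3 : (if (some w.val : Option V) = tc then (1:ℤ) else 0)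
            = (if some w = mu s tc then 1 else 0) := if_congr (indK s w hts) rfl rfl
        rw [g2, g3]
        ring
      · rw [hNnone, hzero, hnone]
        ring
  -- sum bookkeeping
  have hsum : ∑ o : Option {v : V // v ≠ s}, ka' o = ∑ o : Option V, ka o := by
    have e1 : ∑ y : Option {v : V // v ≠ s} ⊕ Unit, ka (rowe y) = ∑ x : Option V, ka x :=
      Equiv.sum_comp rowe ka
    rw [Fintype.sum_sum_type] at e1
    have hre : ∀ o, rowe (Sum.inl o) = emb s o := fun o => rfl
    have hre2 : ∀ u : Unit, rowe (Sum.inr u) = some s := fun _ => rfl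
    simp only [hre, hre2, Finset.sum_const, Finset.card_univ, Fintype.card_unit, one_smul] at e1
    have e2 : ∑ o : Option {v : V // v ≠ s}, (if emb s o = tp then ka (some s) else 0)
        = ka (some s) := by
      have hiff : ∀ o, (if emb s o = tp then ka (some s) else 0)
          = (if o = mu s tp then ka (some s) else 0) := by
        intro o
        refine if_congr ⟨fun h => ?_, fun h => ?_⟩ rfl rfl
        · rw [← mu_emb s o, h]
        · rw [h, hembτ]
      simp_rw [hiff]
      simp
    simp only [hka', Finset.sum_add_distrib, e2]
    rw [← e1]
  calc |M.det| = |N.det| := hdet2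
    _ ≤ ∑ o, ka' o := IH N lo' ka' hka'0 hGoodN
    _ = ∑ o : Option V, ka o := hsum

lemma core : ∀ (n : ℕ) (V : Type) [Fintype V] [DecidableEq V], Fintype.card V = n →
    ∀ (M : Matrix (Option V) (Option V) ℤ) (lo ka : Option V → ℤ), (∀ o, 0 ≤ ka o) →
    (∀ c, GoodCol M c lo ka) → |M.det| ≤ ∑ o : Option V, ka o := by
  intro n
  induction n with
  | zero =>
      intro V _ _ hcard M lo ka hka hM
      have hVempty : IsEmpty V := Fintype.card_eq_zero_iff.mp hcard
      haveI : Subsingleton (Option V) :=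
        ⟨fun x y => by
          cases x with
          | none =>
              cases y with
              | none => rfl
              | some v => exact (hVempty.false v).elim
          | some v => exact (hVempty.false v).elim⟩
      rw [Matrix.det_eq_elem_of_subsingleton M none]
      obtain ⟨h, t, a, b, hrow, hnone, h1, h2, h3, h4⟩ := hM none
      have hh : h = none := by
        cases h with
        | none => rfl
        | some v => exact (hVempty.false v).elim
      have ht : t = none := by
        cases t with
        | none => rfl
        | some v => exact (hVempty.false v).elim
      subst hh; subst ht
      rw [hnone]
      have hsum : ∑ o : Option V, ka o = ka none :=
        Fintype.sum_eq_single none (fun x hx => by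
          cases x with
          | none => exact (hx rfl).elim
          | some v => exact (hVempty.false v).elim)
      rw [hsum, abs_le]
      constructor <;> linarith
  | succ n IHn =>
      intro V _ _ hcard M lo ka hka hM
      have hne : Nonempty V := Fintype.card_pos_iff.mp (by omega)
      obtain ⟨s⟩ := hne
      have hcardW : Fintype.card {v : V // v ≠ s} = n := by
        have := card_ne (α := V) s
        omega
      have IH : ∀ (N : Matrix (Option {v : V // v ≠ s}) (Option {v : V // v ≠ s}) ℤ)
          (lo' ka' : Option {v : V // v ≠ s} → ℤ), (∀ o, 0 ≤ ka' o) →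
          (∀ c, GoodCol N c lo' ka') → |N.det| ≤ ∑ o, ka' o :=
        fun N lo' ka' h1 h2 => IHn {v : V // v ≠ s} hcardW N lo' ka' h1 h2
      by_cases hzrow : ∀ c, M (some s) c = 0
      · rw [Matrix.det_eq_zero_of_row_eq_zero (some s) hzrow, abs_zero]
        exact Finset.sum_nonneg fun o _ => hka o
      · push_neg at hzrow
        obtain ⟨p, hp⟩ := hzrow
        obtain ⟨h, t, a, b, hrows, hnone, h1, h2, h3, h4⟩ := hM p
        have hsp := hrows s
        by_cases e1 : (some s : Option V) = h <;> by_cases e2 : (some s : Option V) = t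
        · exfalso
          rw [hsp, if_pos e1, if_pos e2] at hp
          omega
        · -- entry = 1
          refine step s IH M lo ka hka hM p ?_
          rw [hsp, if_pos e1, if_neg e2]
          ring
        · -- entry = -1 : negate the column
          set M' : Matrix (Option V) (Option V) ℤ :=
            M.updateCol p (fun i => - M i p) with hM'
          have hdetM' : M'.det = -M.det := by
            have hsmul := Matrix.det_updateCol_smul M p (-1 : ℤ) (fun i => M i p)
            have hvec : ((-1 : ℤ) • fun i : Option V => M i p) = (fun i => - M i p) := by
              funext i
              simp
            rw [hvec] at hsmul
            rw [hM', hsmul, Matrix.updateCol_eq_self]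
            ring
          have habs : |M'.det| = |M.det| := by rw [hdetM', abs_neg]
          have hM'good : ∀ c, GoodCol M' c lo ka := by
            intro c
            by_cases hc : c = p
            · subst hc
              refine ⟨t, h, b, a, ?_, ?_, h3, h4, h1, h2⟩
              · intro v
                rw [hM', Matrix.updateCol_self, hrows v]
                ring
              · rw [hM', Matrix.updateCol_self, hnone]
                ring
            · obtain ⟨hC, tC, aC, bC, hrowsC, hnoneC, k1, k2, k3, k4⟩ := hM c
              refine ⟨hC, tC, aC, bC, ?_, ?_, k1, k2, k3, k4⟩
              · intro v
                rw [hM', Matrix.updateCol_ne hc, hrowsC v]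
              · rw [hM', Matrix.updateCol_ne hc, hnoneC]
          have hp' : M' (some s) p = 1 := by
            rw [hM', Matrix.updateCol_self, hsp, if_neg e1, if_pos e2]
            ring
          rw [← habs]
          exact step s IH M' lo ka hka hM'good p hp'
        · exfalso
          rw [hsp, if_neg e1, if_neg e2] at hp
          omega

end DeltaMod

open DeltaMod in
theorem ALam_is_delta_modular (Δ m r : ℕ) (lam : Fin m → ℕ) (hΔ : 2 ≤ Δ)
    (hpos : ∀ i, 0 < lam i)
    (hmono : ∀ i j : Fin m, i ≤ j → lam j ≤ lam i)
    (hsum : ∑ i, lam i = Δ - 1)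
    (hr : m + 1 ≤ r) :
    ∀ f : Fin r → ColIdxLam m r lam, Function.Injective f →
      |((ALam m r lam).submatrix id f).det| ≤ (Δ : ℤ) := by
  obtain ⟨r', rfl⟩ : ∃ r', r = r' + 1 := ⟨r - 1, by omega⟩
  intro f _
  have hmr : m ≤ r' := by omega
  set e : Option (Fin r') ≃ Fin (r' + 1) := (finSuccEquiv r').symm with he
  set B : Matrix (Fin (r' + 1)) (Fin (r' + 1)) ℤ := (ALam m (r' + 1) lam).submatrix id f with hB
  have hdet : |B.det| = |(B.submatrix e e).det| := by
    rw [Matrix.det_submatrix_equiv_self e B]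
  rw [hdet]
  set g : ℕ → ℤ := fun j => if h : j < m then (lam ⟨j, h⟩ : ℤ) else 0 with hg
  set ka : Option (Fin r') → ℤ := fun o =>
    match o with
    | none => 1
    | some v => g v.val
    with hka
  have hkanone : ka none = 1 := rfl
  have hkasome : ∀ v : Fin r', ka (some v) = g v.val := fun _ => rfl
  have hkaval : ∀ (i : Fin m) (hlt : (i.val : ℕ) < r'), ka (some ⟨i.val, hlt⟩) = (lam i : ℤ) := by
    intro i hlt
    rw [hkasome]
    simp only [hg]
    rw [dif_pos i.isLt]
    try norm_num
  have hka0 : ∀ o, 0 ≤ ka o := by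
    intro o
    cases o with
    | none => rw [hkanone]; norm_num
    | some v =>
        rw [hkasome]
        simp only [hg]
        by_cases h : v.val < m
        · rw [dif_pos h]; positivity
        · rw [dif_neg h]
  have hrs : ∀ v : Fin r', e (some v) = v.succ := fun v => finSuccEquiv_symm_some v
  have hr0 : e none = (0 : Fin (r' + 1)) := finSuccEquiv_symm_none
  have hgood : ∀ c, GoodCol (B.submatrix e e) c (fun _ => (0 : ℤ)) ka := by
    intro c
    have hent : ∀ i, (B.submatrix e e) i c = ALam m (r' + 1) lam (e i) (f (e c)) := fun _ => rfl
    rcases hcol : f (e c) with i | ⟨⟨pi, pj⟩, hlt⟩ | ⟨i, k⟩ | ⟨i, k, j, hj0, hji⟩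
    · -- unit column e_i
      by_cases hi : i = (0 : Fin (r' + 1))
      · refine ⟨none, none, 1, 0, ?_, ?_, ?_, ?_, ?_, ?_⟩
        · intro v
          rw [hent, hrs v, hcol]
          show (if v.succ = i then (1 : ℤ) else 0) = _
          rw [if_neg (by rw [hi]; exact Fin.succ_ne_zero v)]
          norm_num
        · rw [hent, hr0, hcol]
          show (if (0 : Fin (r' + 1)) = i then (1 : ℤ) else 0) = 1 - 0
          rw [if_pos hi.symm]
          norm_num
        · norm_num
        · norm_num [hkanone]
        · norm_num
        · norm_num [hkanone]
      · have hiv : i.val ≠ 0 := fun h => hi (Fin.ext h)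
        have hi1 : i.val - 1 < r' := by have := i.isLt; omega
        refine ⟨some ⟨i.val - 1, hi1⟩, none, 0, 0, ?_, ?_, ?_, ?_, ?_, ?_⟩
        · intro v
          rw [hent, hrs v, hcol]
          show (if v.succ = i then (1 : ℤ) else 0) = _
          simp only [Fin.ext_iff, Fin.val_succ, Option.some.injEq, reduceCtorEq, if_false]
          split_ifs <;> first | omega | simp_all
        · rw [hent, hr0, hcol]
          show (if (0 : Fin (r' + 1)) = i then (1 : ℤ) else 0) = 0 - 0
          rw [if_neg (fun h => hiv (by rw [← h]; rfl))]
          norm_num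
        · norm_num
        · exact add_nonneg le_rfl (hka0 (some ⟨i.val - 1, hi1⟩))
        · norm_num
        · norm_num [hkanone]
    · -- difference column e_pi - e_pj
      have hpj : pj.val ≠ 0 := by
        have : pi.val < pj.val := hlt
        omega
      have hpj1 : pj.val - 1 < r' := by have := pj.isLt; omega
      by_cases hpi : pi = (0 : Fin (r' + 1))
      · refine ⟨none, some ⟨pj.val - 1, hpj1⟩, 1, 0, ?_, ?_, ?_, ?_, ?_, ?_⟩
        · intro v
          rw [hent, hrs v, hcol]
          show (if v.succ = pi then (1 : ℤ) else if v.succ = pj then -1 else 0) = _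
          have hvpi : v.succ ≠ pi := by rw [hpi]; exact Fin.succ_ne_zero v
          rw [if_neg hvpi]
          simp only [Fin.ext_iff, Fin.val_succ, Option.some.injEq, reduceCtorEq, if_false]
          split_ifs <;> first | omega | simp_all
        · rw [hent, hr0, hcol]
          show (if (0 : Fin (r' + 1)) = pi then (1 : ℤ) else if (0 : Fin (r' + 1)) = pj then -1 else 0) = 1 - 0
          rw [if_pos hpi.symm]
          norm_num
        · norm_num
        · norm_num [hkanone]
        · norm_num
        · exact add_nonneg le_rfl (hka0 (some ⟨pj.val - 1, hpj1⟩))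
      · have hpiv : pi.val ≠ 0 := fun h => hpi (Fin.ext h)
        have hpi1 : pi.val - 1 < r' := by have := pi.isLt; omega
        refine ⟨some ⟨pi.val - 1, hpi1⟩, some ⟨pj.val - 1, hpj1⟩, 0, 0, ?_, ?_, ?_, ?_, ?_, ?_⟩
        · intro v
          rw [hent, hrs v, hcol]
          show (if v.succ = pi then (1 : ℤ) else if v.succ = pj then -1 else 0) = _
          simp only [Fin.ext_iff, Fin.val_succ, Option.some.injEq]
          have : pi.val < pj.val := hlt
          split_ifs <;> first | omega | simp_all
        · rw [hent, hr0, hcol]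
          show (if (0 : Fin (r' + 1)) = pi then (1 : ℤ) else if (0 : Fin (r' + 1)) = pj then -1 else 0) = 0 - 0
          rw [if_neg (fun h => hpiv (by rw [← h]; rfl)),
            if_neg (fun h => hpj (by rw [← h]; rfl))]
          norm_num
        · norm_num
        · exact add_nonneg le_rfl (hka0 (some ⟨pi.val - 1, hpi1⟩))
        · norm_num
        · exact add_nonneg le_rfl (hka0 (some ⟨pj.val - 1, hpj1⟩))
    · -- heavy column (k+1) e_0 + e_{i+1}
      have him : i.val < r' := lt_of_lt_of_le i.isLt hmr
      refine ⟨some ⟨i.val, him⟩, none, (k.val : ℤ) + 1, 0, ?_, ?_, ?_, ?_, ?_, ?_⟩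
      · intro v
        rw [hent, hrs v, hcol]
        show (if (v.succ).val = 0 then ((k.val : ℤ) + 1) else if (v.succ).val = i.val + 1 then 1 else 0) = _
        simp only [Fin.ext_iff, Fin.val_succ, Option.some.injEq, reduceCtorEq, if_false]
        split_ifs <;> omega
      · rw [hent, hr0, hcol]
        show (if (0 : Fin (r' + 1)).val = 0 then ((k.val : ℤ) + 1) else if (0 : Fin (r' + 1)).val = i.val + 1 then 1 else 0) = ((k.val : ℤ) + 1) - 0
        norm_num
      · positivity
      · rw [hkaval i him]
        show (k.val : ℤ) + 1 ≤ 0 + (lam i : ℤ)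
        have := k.isLt
        omega
      · norm_num
      · norm_num [hkanone]
    · -- heavy column (k+1) e_0 + e_{i+1} - e_j
      have him : i.val < r' := lt_of_lt_of_le i.isLt hmr
      have hj1 : j.val - 1 < r' := by have := j.isLt; omega
      refine ⟨some ⟨i.val, him⟩, some ⟨j.val - 1, hj1⟩, (k.val : ℤ) + 1, 0, ?_, ?_, ?_, ?_, ?_, ?_⟩
      · intro v
        rw [hent, hrs v, hcol]
        show (if (v.succ).val = 0 then ((k.val : ℤ) + 1) else if (v.succ).val = i.val + 1 then 1 else if (v.succ).val = j.val then -1 else 0) = _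
        have hj0' : j.val ≠ 0 := hj0
        have hji' : j.val ≠ i.val + 1 := hji
        simp only [Fin.ext_iff, Fin.val_succ, Option.some.injEq]
        split_ifs <;> first | omega | simp_all
      · rw [hent, hr0, hcol]
        show (if (0 : Fin (r' + 1)).val = 0 then ((k.val : ℤ) + 1) else if (0 : Fin (r' + 1)).val = i.val + 1 then 1 else if (0 : Fin (r' + 1)).val = j.val then -1 else 0) = ((k.val : ℤ) + 1) - 0
        norm_num
      · positivity
      · rw [hkaval i him]
        show (k.val : ℤ) + 1 ≤ 0 + (lam i : ℤ)
        have := k.isLt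
        omega
      · norm_num
      · exact add_nonneg le_rfl (hka0 (some ⟨j.val - 1, hj1⟩))
  have hcardF : Fintype.card (Fin r') = r' := Fintype.card_fin r'
  have hbound := core r' (Fin r') hcardF (B.submatrix e e) (fun _ => (0 : ℤ)) ka hka0 hgood
  have hS : ∑ o : Option (Fin r'), ka o = (Δ : ℤ) := by
    have h1 : ∑ o : Option (Fin r'), ka o = ka none + ∑ v : Fin r', ka (some v) := by
      rw [Fintype.sum_option]
    have h2 : ∑ v : Fin r', ka (some v) = ∑ j ∈ Finset.range r', g j := by
      rw [← Fin.sum_univ_eq_sum_range g r']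
    have h3 : ∑ j ∈ Finset.range r', g j = ∑ j ∈ Finset.range m, g j :=
      (Finset.sum_subset (Finset.range_subset_range.mpr hmr) (fun x _ hx => by
        rw [Finset.mem_range] at hx
        simp only [hg]
        rw [dif_neg hx])).symm
    have h4 : ∑ j ∈ Finset.range m, g j = ∑ i : Fin m, (lam i : ℤ) := by
      rw [← Fin.sum_univ_eq_sum_range g m]
      refine Finset.sum_congr rfl (fun i _ => ?_)
      simp only [hg]
      rw [dif_pos i.isLt]
      try norm_num
    have h5 : ∑ i : Fin m, (lam i : ℤ) = ((Δ - 1 : ℕ) : ℤ) := by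
      rw [← Nat.cast_sum, hsum]
    rw [h1, h2, h3, h4, h5, hkanone]
    have : (1 : ℤ) + ((Δ - 1 : ℕ) : ℤ) = (Δ : ℤ) := by
      have : 1 ≤ Δ := by omega
      push_cast [Nat.cast_sub this]
      ring
    exact this
  calc |(B.submatrix e e).det| ≤ ∑ o : Option (Fin r'), ka o := hbound
    _ = (Δ : ℤ) := hS
end

section
/- Let r ≥ 1 and n ≥ r be integers and let B ∈ ℝ^{r×n}. Let B̂ denote the (r+1)×n matrix obtained from B by appending as a last row the vector −1ᵀB (the negative of the sum of the rows of B). Then the maximum of |det(C)| over all r×r submatrices C of B equals the maximum of |det(C)| over all r×r submatrices C of B̂. In particular, if B has rank r (so B̂ also has rank r), then B is Δ-modular if and only if B̂ is Δ-modular. -/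
open Matrix in
lemma aux_det_eq {r : ℕ} (M : Matrix (Fin r) (Fin r) ℝ)
    (N : Matrix (Fin (r + 1)) (Fin r) ℝ)
    (hN : N = Matrix.of fun (i : Fin (r + 1)) j =>
      if h : (i : ℕ) < r then M ⟨i, h⟩ j else -(∑ k, M k j))
    (g : Fin r → Fin (r + 1)) (hg : Function.Injective g) :
    |(N.submatrix g id).det| = |M.det| := by
  have hN0 : ∀ (i : Fin (r + 1)) (h : (i : ℕ) < r) (j : Fin r), N i j = M ⟨(i : ℕ), h⟩ j := by
    intro i h j
    subst hN
    simp [h]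
  have hN1 : ∀ (k : Fin r) (j : Fin r), N (Fin.castSucc k) j = M k j := by
    intro k j
    have h : ((Fin.castSucc k : Fin (r + 1)) : ℕ) < r := by simp
    have := hN0 (Fin.castSucc k) h j
    simpa using this
  have hN2 : ∀ j, N (Fin.last r) j = -(∑ k, M k j) := by
    intro j
    subst hN
    simp
  by_cases hc : ∀ i, (g i : ℕ) < r
  · -- g avoids the last row
    have hinj : Function.Injective fun i => (⟨(g i : ℕ), hc i⟩ : Fin r) := by
      intro a b hab
      have hv := congrArg Fin.val hab
      exact hg (Fin.ext hv)
    let σ : Equiv.Perm (Fin r) := Equiv.ofBijective _ (Finite.injective_iff_bijective.mp hinj)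
    have hsub : N.submatrix g id = M.submatrix σ id := by
      ext i j
      show N (g i) j = M (σ i) j
      have hσ : σ i = ⟨(g i : ℕ), hc i⟩ := rfl
      rw [hσ]
      exact hN0 (g i) (hc i) j
    rw [hsub, Matrix.det_permute, abs_mul]
    rcases Int.units_eq_one_or (Equiv.Perm.sign σ) with h | h <;> simp [h]
  · push_neg at hc
    obtain ⟨i0, hi0'⟩ := hc
    have hi0 : g i0 = Fin.last r := by
      have := (g i0).isLt
      exact Fin.ext (by simp [Fin.last]; omega)
    have hns : ¬Function.Surjective g := by
      intro hs
      have := Fintype.card_le_of_surjective g hs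
      simp at this
    rw [Function.Surjective] at hns
    push_neg at hns
    obtain ⟨m', hm'⟩ := hns
    have hm'ne : m' ≠ Fin.last r := fun h => hm' i0 (hi0.trans h.symm)
    have hm'lt : (m' : ℕ) < r := Fin.val_lt_last hm'ne
    set m : Fin r := ⟨(m' : ℕ), hm'lt⟩ with hm_def
    have hm : Fin.castSucc m = m' := Fin.ext rfl
    have hm'' : ∀ i, g i ≠ m' := hm'
    have himg : (Finset.univ.image g) = Finset.univ.erase m' := by
      apply Finset.eq_of_subset_of_card_le
      · intro x hx
        obtain ⟨i, _, rfl⟩ := Finset.mem_image.mp hx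
        exact Finset.mem_erase.mpr ⟨hm'' i, Finset.mem_univ _⟩
      · rw [Finset.card_erase_of_mem (Finset.mem_univ _),
          Finset.card_image_of_injective _ hg]
        simp
    have hrange : ∀ k : Fin r, k ≠ m → ∃ i, g i = Fin.castSucc k := by
      intro k hk
      have hne : Fin.castSucc k ≠ m' := by
        rw [← hm]
        exact fun h => hk (Fin.castSucc_injective r h)
      have : Fin.castSucc k ∈ Finset.univ.image g := by
        rw [himg]
        exact Finset.mem_erase.mpr ⟨hne, Finset.mem_univ _⟩
      obtain ⟨i, _, hi⟩ := Finset.mem_image.mp this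
      exact ⟨i, hi⟩
    have hglt : ∀ i, i ≠ i0 → (g i : ℕ) < r := by
      intro i hi
      refine Fin.val_lt_last fun he => hi (hg (he.trans hi0.symm))
    let g' : Fin r → Fin r := fun i => if h : i = i0 then m else ⟨(g i : ℕ), hglt i h⟩
    have hg'inj : Function.Injective g' := by
      intro a b hab
      by_cases ha : a = i0 <;> by_cases hb : b = i0
      · rw [ha, hb]
      · exfalso
        apply hm'' b
        simp only [g', dif_pos ha, dif_neg hb] at hab
        have hv := congrArg Fin.val hab
        exact Fin.ext hv.symm
      · exfalso
        apply hm'' a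
        simp only [g', dif_neg ha, dif_pos hb] at hab
        have hv := congrArg Fin.val hab
        exact Fin.ext hv
      · simp only [g', dif_neg ha, dif_neg hb] at hab
        have hv := congrArg Fin.val hab
        exact hg (Fin.ext hv)
    let σ : Equiv.Perm (Fin r) := Equiv.ofBijective g' (Finite.injective_iff_bijective.mp hg'inj)
    set A := N.submatrix g id with hA
    have hAi0 : A i0 = -(∑ k, (M k : Fin r → ℝ)) := by
      funext j
      simp only [hA, Matrix.submatrix_apply, id_eq, hi0, hN2]
      simp [Finset.sum_apply]
      exact (Finset.sum_apply j Finset.univ (fun k => M k)).symm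
    have h1 : A.det = ((-1 : ℝ)) * (A.updateRow i0 (∑ k, (M k : Fin r → ℝ))).det := by
      conv_lhs => rw [← Matrix.updateRow_eq_self A i0, hAi0, ← neg_one_smul ℝ]
      rw [Matrix.det_updateRow_smul]
    have hsum : (A.updateRow i0 (∑ k, (M k : Fin r → ℝ))).det
        = ∑ k, (A.updateRow i0 (M k)).det := by
      exact (Matrix.detRowAlternating (n := Fin r) (R := ℝ)).map_update_sum
        Finset.univ i0 (fun k => (M k : Fin r → ℝ)) A
    have hterm : ∀ k ∈ Finset.univ, k ≠ m → (A.updateRow i0 (M k)).det = 0 := by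
      intro k _ hk
      obtain ⟨i1, hi1⟩ := hrange k hk
      have hi1ne : i1 ≠ i0 := by
        intro h
        rw [h, hi0] at hi1
        exact absurd hi1.symm (Fin.castSucc_lt_last k).ne
      apply Matrix.det_zero_of_row_eq hi1ne
      rw [Matrix.updateRow_ne hi1ne, Matrix.updateRow_self]
      funext j
      simp only [hA, Matrix.submatrix_apply, id_eq, hi1, hN1]
    have hsum2 : ∑ k, (A.updateRow i0 (M k)).det = (A.updateRow i0 (M m)).det :=
      Finset.sum_eq_single m hterm (fun h => absurd (Finset.mem_univ m) h)
    have hup : A.updateRow i0 (M m) = M.submatrix σ id := by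
      ext i j
      by_cases hi : i = i0
      · subst hi
        rw [Matrix.updateRow_self]
        simp [σ, g', Matrix.submatrix_apply]
      · rw [Matrix.updateRow_ne hi]
        simp only [hA, Matrix.submatrix_apply, id_eq, σ, Equiv.ofBijective_apply, g',
          dif_neg hi]
        exact hN0 (g i) (hglt i hi) j
    rw [h1, hsum, hsum2, hup, Matrix.det_permute, abs_mul, abs_mul]
    rcases Int.units_eq_one_or (Equiv.Perm.sign σ) with h | h <;> simp [h]

theorem appended_row_preserves_max_subdeterminant (r n : ℕ) (hr : 1 ≤ r) (hn : r ≤ n)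
    (B : Matrix (Fin r) (Fin n) ℝ)
    (Bhat : Matrix (Fin (r + 1)) (Fin n) ℝ)
    (hBhat : Bhat = Matrix.of fun (i : Fin (r + 1)) (j : Fin n) =>
      if h : i.val < r then B ⟨i, h⟩ j else -(∑ k, B k j)) :
    (sSup {x : ℝ | ∃ f : Fin r → Fin n, Function.Injective f ∧
        x = |(B.submatrix id f).det|} =
      sSup {x : ℝ | ∃ (g : Fin r → Fin (r + 1)) (f : Fin r → Fin n),
        Function.Injective g ∧ Function.Injective f ∧
        x = |(Bhat.submatrix g f).det|}) ∧
    (B.rank = r →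
      ∀ Δ : ℝ,
        ((∀ f : Fin r → Fin n, Function.Injective f →
            |(B.submatrix id f).det| ≤ Δ) ↔
          (∀ (g : Fin r → Fin (r + 1)) (f : Fin r → Fin n),
            Function.Injective g → Function.Injective f →
            |(Bhat.submatrix g f).det| ≤ Δ))) := by
  have key : ∀ (f : Fin r → Fin n) (g : Fin r → Fin (r + 1)), Function.Injective g →
      |(Bhat.submatrix g f).det| = |(B.submatrix id f).det| := by
    intro f g hg
    have h1 : Bhat.submatrix g f = (Bhat.submatrix id f).submatrix g id := by
      ext i j; simp
    rw [h1]
    apply aux_det_eq (B.submatrix id f) (Bhat.submatrix id f) ?_ g hg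
    ext i j
    subst hBhat
    by_cases h : (i : ℕ) < r <;> simp [h, Matrix.submatrix_apply]
  have hcs : Function.Injective (Fin.castSucc : Fin r → Fin (r + 1)) :=
    Fin.castSucc_injective r
  constructor
  · congr 1
    ext x
    simp only [Set.mem_setOf_eq]
    constructor
    · rintro ⟨f, hf, rfl⟩
      exact ⟨Fin.castSucc, f, hcs, hf, (key f _ hcs).symm⟩
    · rintro ⟨g, f, hg, hf, rfl⟩
      exact ⟨f, hf, key f g hg⟩
  · intro _ Δ
    constructor
    · intro h g f hg hf
      rw [key f g hg]
      exact h f hf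
    · intro h f hf
      have := h Fin.castSucc f hcs hf
      rwa [key f _ hcs] at this
end

section
/- Let r ≥ 2 be an integer, let F be a field, and let A ∈ F^{r × binom(r+1,2)} be a matrix such that, for every set S of column indices, the columns of A indexed by S are linearly independent over F if and only if the columns of [I_r | D_r] (with its integer entries interpreted in F) indexed by S are linearly independent over F (i.e., the identity map on column indices is an isomorphism from the vector matroid of A to that of [I_r | D_r], both representing M(K_{r+1})). Then there exist an invertible matrix E ∈ F^{r×r} and nonzero scalars c_1, …, c_{binom(r+1,2)} ∈ F such that E·A·diag(c_1, …, c_{binom(r+1,2)}) = [I_r | D_r]; equivalently, [I_r | D_r] can be obtained from A by elementary row operations and column scaling. -/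
/-- The block matrix `[I_r | D_r]`. -/
def IDmat (r : ℕ) : Matrix (Fin r) (Fin r ⊕ PairIdx r) ℤ :=
  Matrix.of fun i => Sum.elim (fun j => if i = j then 1 else 0) (fun p => Dmat r i p)

section helpers
variable {F : Type} [Field F] {ι V : Type*} [AddCommGroup V] [Module F V]

lemma li_set_iff (w : ι → V) {n : ℕ} (u : Fin n → ι) (hu : Function.Injective u) :
    LinearIndependent F (fun j : (Set.range u) => w j.val) ↔
    LinearIndependent F (fun k => w (u k)) := by
  rw [← linearIndependent_equiv (Equiv.ofInjective u hu)]
  rfl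

lemma li_range_iff (w : ι → V) {κ : Type*} (u : κ → ι) (hu : Function.Injective u) :
    LinearIndependent F (fun j : (Set.range u) => w j.val) ↔
    LinearIndependent F (fun k => w (u k)) := by
  rw [← linearIndependent_equiv (Equiv.ofInjective u hu)]
  rfl

lemma li_pair_iff (w : ι → V) {x y : ι} (hxy : x ≠ y) :
    LinearIndependent F (fun j : ({x, y} : Set ι) => w j.val) ↔
    ∀ a b : F, a • w x + b • w y = 0 → a = 0 ∧ b = 0 := by
  have hr : ({x, y} : Set ι) = Set.range ![x, y] := by
    simp [Set.range_comp]; exact (Set.pair_comm x y)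
  have hu : Function.Injective ![x, y] := by
    intro a b hab
    fin_cases a <;> fin_cases b <;> simp_all
  rw [hr, li_set_iff w _ hu, Fintype.linearIndependent_iff]
  constructor
  · intro H a b hab
    have := H ![a, b] (by simpa [Fin.sum_univ_two] using hab)
    exact ⟨this 0, this 1⟩
  · intro H g hg
    have := H (g 0) (g 1) (by simpa [Fin.sum_univ_two] using hg)
    intro i; fin_cases i <;> simp [this.1, this.2]

lemma li_triple_iff (w : ι → V) {x y z : ι} (hxy : x ≠ y) (hxz : x ≠ z) (hyz : y ≠ z) :
    LinearIndependent F (fun j : ({x, y, z} : Set ι) => w j.val) ↔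
    ∀ a b c : F, a • w x + b • w y + c • w z = 0 → a = 0 ∧ b = 0 ∧ c = 0 := by
  have hr : ({x, y, z} : Set ι) = Set.range ![x, y, z] := by
    ext t; simp [Set.range_comp, Fin.exists_fin_succ, or_comm, or_assoc, eq_comm]
    tauto
  have hu : Function.Injective ![x, y, z] := by
    intro a b hab
    fin_cases a <;> fin_cases b <;> simp_all
  rw [hr, li_set_iff w _ hu, Fintype.linearIndependent_iff]
  constructor
  · intro H a b c habc
    have := H ![a, b, c] (by simpa [Fin.sum_univ_three, add_assoc] using habc)
    exact ⟨this 0, this 1, this 2⟩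
  · intro H g hg
    have := H (g 0) (g 1) (g 2) (by simpa [Fin.sum_univ_three, add_assoc] using hg)
    intro i; fin_cases i <;> simp [this.1, this.2.1, this.2.2]

end helpers

open Matrix
theorem cliques_uniquely_representable (r : ℕ) (hr : 2 ≤ r) (F : Type) [Field F]
    (A : Matrix (Fin r) (Fin r ⊕ PairIdx r) F)
    (hiso : ∀ S : Set (Fin r ⊕ PairIdx r),
      LinearIndependent F (fun j : S => fun i => A i j.val) ↔
      LinearIndependent F (fun j : S => fun i => ((IDmat r i j.val : ℤ) : F))) :
    ∃ (E : Matrix (Fin r) (Fin r) F) (c : (Fin r ⊕ PairIdx r) → F),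
      IsUnit E.det ∧ (∀ j, c j ≠ 0) ∧
      E * A * Matrix.diagonal c = (IDmat r).map (fun z : ℤ => (z : F)) := by
  classical
  set v : (Fin r ⊕ PairIdx r) → (Fin r → F) := fun j i => ((IDmat r i j : ℤ) : F) with hv
  set colA : (Fin r ⊕ PairIdx r) → (Fin r → F) := fun j i => A i j with hcolA
  have hv1 : ∀ k, v (Sum.inl k) = fun i => if i = k then (1:F) else 0 := by
    intro k; funext i; simp [hv, IDmat]
  have hv2 : ∀ p : PairIdx r, v (Sum.inr p) =
      fun i => if i = p.val.1 then (1:F) else if i = p.val.2 then -1 else 0 := by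
    intro p; funext i; simp [hv, IDmat, Dmat]
  -- Step 1: B is invertible
  set B : Matrix (Fin r) (Fin r) F := Matrix.of (fun i j => A i (Sum.inl j)) with hB
  have hBunit : IsUnit B := by
    rw [← Matrix.linearIndependent_cols_iff_isUnit]
    have h1 : LinearIndependent F (fun k : Fin r => v (Sum.inl k)) := by
      have he : (fun k : Fin r => v (Sum.inl k)) =
          fun k => Matrix.transpose (1 : Matrix (Fin r) (Fin r) F) k := by
        funext k i; rw [hv1]; simp [Matrix.transpose_apply, Matrix.one_apply]
      rw [he]
      exact Matrix.linearIndependent_cols_iff_isUnit.mpr isUnit_one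
    have h2 := (li_range_iff v Sum.inl Sum.inl_injective).2 h1
    have h3 := (hiso (Set.range Sum.inl)).2 h2
    exact (li_range_iff colA Sum.inl Sum.inl_injective).1 h3
  have hBdet : IsUnit B.det := (Matrix.isUnit_iff_isUnit_det B).1 hBunit
  have hBB : B⁻¹ * B = 1 := Matrix.nonsing_inv_mul B hBdet
  obtain ⟨A', hA'⟩ : ∃ M : Matrix (Fin r) (Fin r ⊕ PairIdx r) F, M = B⁻¹ * A := ⟨_, rfl⟩
  set colA' : (Fin r ⊕ PairIdx r) → (Fin r → F) := fun j i => A' i j with hcolA'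
  have hcol' : ∀ j, colA' j = B⁻¹ *ᵥ (colA j) := by
    intro j; funext i
    simp [hcolA', hA', Matrix.mulVec, Matrix.mul_apply, dotProduct, hcolA]
  have hcolBack : ∀ j, colA j = B *ᵥ (colA' j) := by
    intro j
    rw [hcol', Matrix.mulVec_mulVec, Matrix.mul_nonsing_inv B hBdet, Matrix.one_mulVec]
  have hA'1 : ∀ i j, A' i (Sum.inl j) = if i = j then (1:F) else 0 := by
    intro i j
    have h : A' i (Sum.inl j) = (B⁻¹ * B) i j := by
      simp [hA', Matrix.mul_apply, hB]
    rw [h, hBB, Matrix.one_apply]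
  -- column structure of A' on pair columns
  have hcolfact : ∀ p : PairIdx r, ∃ a b : F, a ≠ 0 ∧ b ≠ 0 ∧
      ∀ i, A' i (Sum.inr p) = if i = p.val.1 then a else if i = p.val.2 then b else 0 := by
    rintro ⟨⟨p1, p2⟩, hp⟩
    have hne : p1 ≠ p2 := ne_of_lt hp
    have d1 : (Sum.inl p1 : Fin r ⊕ PairIdx r) ≠ Sum.inl p2 := by simp [hne]
    have d2 : (Sum.inl p1 : Fin r ⊕ PairIdx r) ≠ Sum.inr ⟨(p1, p2), hp⟩ := by simp
    have d3 : (Sum.inl p2 : Fin r ⊕ PairIdx r) ≠ Sum.inr ⟨(p1, p2), hp⟩ := by simp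
    have hdep : ¬ LinearIndependent F
        (fun j : ({Sum.inl p1, Sum.inl p2, Sum.inr ⟨(p1, p2), hp⟩} :
          Set (Fin r ⊕ PairIdx r)) => v j.val) := by
      rw [li_triple_iff v d1 d2 d3]
      intro H
      have h0 : (1:F) • v (Sum.inl p1) + (-1:F) • v (Sum.inl p2)
          + (-1:F) • v (Sum.inr ⟨(p1, p2), hp⟩) = 0 := by
        rw [hv1, hv1, hv2]
        funext i
        simp only [Pi.add_apply, Pi.smul_apply, smul_eq_mul, Pi.zero_apply]
        split_ifs <;> try ring
        all_goals exact absurd ((‹i = p1›).symm.trans ‹i = p2›) hne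
      exact one_ne_zero (H 1 (-1) (-1) h0).1
    have hAdep : ¬ LinearIndependent F
        (fun j : ({Sum.inl p1, Sum.inl p2, Sum.inr ⟨(p1, p2), hp⟩} :
          Set (Fin r ⊕ PairIdx r)) => colA j.val) :=
      fun h => hdep ((hiso _).1 h)
    rw [li_triple_iff colA d1 d2 d3] at hAdep
    push_neg at hAdep
    obtain ⟨α, β, γ, hrel, hnt⟩ := hAdep
    have hrel' : α • colA' (Sum.inl p1) + β • colA' (Sum.inl p2)
        + γ • colA' (Sum.inr ⟨(p1, p2), hp⟩) = 0 := by
      rw [hcol', hcol', hcol', ← Matrix.mulVec_smul, ← Matrix.mulVec_smul, ← Matrix.mulVec_smul,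
        ← Matrix.mulVec_add, ← Matrix.mulVec_add, hrel, Matrix.mulVec_zero]
    have hpt : ∀ i, α * (if i = p1 then 1 else 0) + β * (if i = p2 then 1 else 0)
        + γ * A' i (Sum.inr ⟨(p1, p2), hp⟩) = 0 := by
      intro i
      have h := congrFun hrel' i
      simp only [hcolA', Pi.add_apply, Pi.smul_apply, smul_eq_mul, Pi.zero_apply] at h
      rw [hA'1, hA'1] at h
      exact h
    have hγ : γ ≠ 0 := by
      intro hγ0
      have e1 := hpt p1
      have e2 := hpt p2
      rw [if_pos rfl, if_neg hne, hγ0] at e1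
      rw [if_neg (Ne.symm hne), if_pos rfl, hγ0] at e2
      exact hnt (by linear_combination e1) (by linear_combination e2) hγ0
    have pairLI : ∀ (x : Fin r ⊕ PairIdx r), x ≠ Sum.inr ⟨(p1, p2), hp⟩ →
        (∀ s t : F, s • v x + t • v (Sum.inr ⟨(p1, p2), hp⟩) = 0 → s = 0 ∧ t = 0) →
        ∀ s t : F, s • colA' x + t • colA' (Sum.inr ⟨(p1, p2), hp⟩) = 0 → s = 0 ∧ t = 0 := by
      intro x hx hvLI s t hst
      have hvli : LinearIndependent F
          (fun j : ({x, Sum.inr ⟨(p1, p2), hp⟩} : Set (Fin r ⊕ PairIdx r)) => v j.val) :=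
        (li_pair_iff v hx).2 hvLI
      have hAli := (hiso _).2 hvli
      rw [li_pair_iff colA hx] at hAli
      apply hAli
      have h : s • colA x + t • colA (Sum.inr ⟨(p1, p2), hp⟩)
          = B *ᵥ (s • colA' x + t • colA' (Sum.inr ⟨(p1, p2), hp⟩)) := by
        rw [Matrix.mulVec_add, Matrix.mulVec_smul, Matrix.mulVec_smul, ← hcolBack, ← hcolBack]
      rw [h, hst, Matrix.mulVec_zero]
    have hcolf : ∀ i, A' i (Sum.inr ⟨(p1, p2), hp⟩)
        = if i = p1 then -(α/γ) else if i = p2 then -(β/γ) else 0 := by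
      intro i
      have h := hpt i
      rcases eq_or_ne i p1 with h1 | h1
      · have h2 : i ≠ p2 := by rw [h1]; exact hne
        rw [if_pos h1, if_neg h2] at h
        rw [if_pos h1]
        field_simp
        linear_combination h
      · rcases eq_or_ne i p2 with h2 | h2
        · rw [if_neg h1, if_pos h2] at h
          rw [if_neg h1, if_pos h2]
          field_simp
          linear_combination h
        · rw [if_neg h1, if_neg h2] at h
          rw [if_neg h1, if_neg h2]
          simp only [mul_zero, zero_add, add_zero, zero_mul] at h
          exact (mul_eq_zero.1 h).resolve_left hγ
    have ha0 : -(α/γ) ≠ 0 := by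
      intro ha0
      have hα : α = 0 := by field_simp at ha0; linear_combination -ha0
      have hvp : ∀ s t : F, s • v (Sum.inl p2) + t • v (Sum.inr ⟨(p1, p2), hp⟩) = 0
          → s = 0 ∧ t = 0 := by
        intro s t hst
        have e1 := congrFun hst p1
        have e2 := congrFun hst p2
        simp only [Pi.add_apply, Pi.smul_apply, smul_eq_mul, Pi.zero_apply, hv1, hv2,
          eq_self_iff_true, if_true] at e1 e2
        rw [if_neg hne] at e1
        rw [if_neg (Ne.symm hne)] at e2
        exact ⟨by linear_combination e1 + e2, by linear_combination e1⟩
      have hrel2 : (-(β/γ)) • colA' (Sum.inl p2)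
          + (-1 : F) • colA' (Sum.inr ⟨(p1, p2), hp⟩) = 0 := by
        funext i
        simp only [hcolA', Pi.add_apply, Pi.smul_apply, smul_eq_mul, Pi.zero_apply]
        rw [hcolf i, hA'1]
        rcases eq_or_ne i p1 with h1 | h1
        · have h2 : i ≠ p2 := by rw [h1]; exact hne
          rw [if_neg h2, if_pos h1, hα]; ring
        · rcases eq_or_ne i p2 with h2 | h2
          · rw [if_pos h2, if_neg h1, if_pos h2]; ring
          · rw [if_neg h2, if_neg h1, if_neg h2]; ring
      have h := (pairLI (Sum.inl p2) d3 hvp _ (-1) hrel2).2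
      norm_num at h
    have hb0 : -(β/γ) ≠ 0 := by
      intro hb0
      have hβ : β = 0 := by field_simp at hb0; linear_combination -hb0
      have hvp : ∀ s t : F, s • v (Sum.inl p1) + t • v (Sum.inr ⟨(p1, p2), hp⟩) = 0
          → s = 0 ∧ t = 0 := by
        intro s t hst
        have e1 := congrFun hst p1
        have e2 := congrFun hst p2
        simp only [Pi.add_apply, Pi.smul_apply, smul_eq_mul, Pi.zero_apply, hv1, hv2,
          eq_self_iff_true, if_true] at e1 e2
        rw [if_neg (Ne.symm hne), if_neg (Ne.symm hne)] at e2
        exact ⟨by linear_combination e1 + e2, by linear_combination -e2⟩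
      have hrel2 : (-(α/γ)) • colA' (Sum.inl p1)
          + (-1 : F) • colA' (Sum.inr ⟨(p1, p2), hp⟩) = 0 := by
        funext i
        simp only [hcolA', Pi.add_apply, Pi.smul_apply, smul_eq_mul, Pi.zero_apply]
        rw [hcolf i, hA'1]
        rcases eq_or_ne i p1 with h1 | h1
        · have h2 : i ≠ p2 := by rw [h1]; exact hne
          rw [if_pos h1, if_pos h1]; ring
        · rcases eq_or_ne i p2 with h2 | h2
          · rw [if_neg h1, if_neg h1, if_pos h2, hβ]; ring
          · rw [if_neg h1, if_neg h1, if_neg h2]; ring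
      have h := (pairLI (Sum.inl p1) d2 hvp _ (-1) hrel2).2
      norm_num at h
    exact ⟨-(α/γ), -(β/γ), ha0, hb0, hcolf⟩
  choose aF bF haF hbF hcolf using hcolfact
  have hlam0 : ∀ p, bF p / aF p ≠ 0 := fun p => div_ne_zero (hbF p) (haF p)
  have htri : ∀ (i j k : Fin r) (hij : i < j) (hjk : j < k),
      bF ⟨(i,k), lt_trans hij hjk⟩ / aF ⟨(i,k), lt_trans hij hjk⟩ =
      -((bF ⟨(i,j), hij⟩ / aF ⟨(i,j), hij⟩) * (bF ⟨(j,k), hjk⟩ / aF ⟨(j,k), hjk⟩)) := by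
    intro i j k hij hjk
    have hik : i < k := lt_trans hij hjk
    have hij' : i ≠ j := ne_of_lt hij
    have hjk' : j ≠ k := ne_of_lt hjk
    have hik' : i ≠ k := ne_of_lt hik
    have d1 : (Sum.inr ⟨(i,j), hij⟩ : Fin r ⊕ PairIdx r) ≠ Sum.inr ⟨(j,k), hjk⟩ := by
      simp only [ne_eq, Sum.inr.injEq, Subtype.mk.injEq, Prod.mk.injEq, not_and]
      intro h; exact absurd h hij'
    have d2 : (Sum.inr ⟨(i,j), hij⟩ : Fin r ⊕ PairIdx r) ≠ Sum.inr ⟨(i,k), hik⟩ := by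
      simp only [ne_eq, Sum.inr.injEq, Subtype.mk.injEq, Prod.mk.injEq, not_and]
      intro _; exact hjk'
    have d3 : (Sum.inr ⟨(j,k), hjk⟩ : Fin r ⊕ PairIdx r) ≠ Sum.inr ⟨(i,k), hik⟩ := by
      simp only [ne_eq, Sum.inr.injEq, Subtype.mk.injEq, Prod.mk.injEq, not_and]
      intro h; exact absurd h.symm hij'
    have hdep : ¬ LinearIndependent F
        (fun x : ({Sum.inr ⟨(i,j), hij⟩, Sum.inr ⟨(j,k), hjk⟩, Sum.inr ⟨(i,k), hik⟩} :
          Set (Fin r ⊕ PairIdx r)) => v x.val) := by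
      rw [li_triple_iff v d1 d2 d3]
      intro H
      have h0 : (1:F) • v (Sum.inr ⟨(i,j), hij⟩) + (1:F) • v (Sum.inr ⟨(j,k), hjk⟩)
          + (-1:F) • v (Sum.inr ⟨(i,k), hik⟩) = 0 := by
        rw [hv2, hv2, hv2]
        funext x
        simp only [Pi.add_apply, Pi.smul_apply, smul_eq_mul, Pi.zero_apply]
        split_ifs <;> try ring
        all_goals first
          | exact absurd ((‹x = i›).symm.trans ‹x = j›) hij'
          | exact absurd ((‹x = j›).symm.trans ‹x = k›) hjk'
          | exact absurd ((‹x = i›).symm.trans ‹x = k›) hik'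
      exact one_ne_zero (H 1 1 (-1) h0).1
    have hAdep : ¬ LinearIndependent F
        (fun x : ({Sum.inr ⟨(i,j), hij⟩, Sum.inr ⟨(j,k), hjk⟩, Sum.inr ⟨(i,k), hik⟩} :
          Set (Fin r ⊕ PairIdx r)) => colA x.val) :=
      fun h => hdep ((hiso _).1 h)
    rw [li_triple_iff colA d1 d2 d3] at hAdep
    push_neg at hAdep
    obtain ⟨α, β, γ, hrel, hnt⟩ := hAdep
    have hrel' : α • colA' (Sum.inr ⟨(i,j), hij⟩) + β • colA' (Sum.inr ⟨(j,k), hjk⟩)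
        + γ • colA' (Sum.inr ⟨(i,k), hik⟩) = 0 := by
      rw [hcol', hcol', hcol', ← Matrix.mulVec_smul, ← Matrix.mulVec_smul, ← Matrix.mulVec_smul,
        ← Matrix.mulVec_add, ← Matrix.mulVec_add, hrel, Matrix.mulVec_zero]
    have hpt : ∀ x, α * A' x (Sum.inr ⟨(i,j), hij⟩) + β * A' x (Sum.inr ⟨(j,k), hjk⟩)
        + γ * A' x (Sum.inr ⟨(i,k), hik⟩) = 0 := by
      intro x
      have h := congrFun hrel' x
      simpa only [hcolA', Pi.add_apply, Pi.smul_apply, smul_eq_mul, Pi.zero_apply] using h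
    have e1 := hpt i
    have e2 := hpt j
    have e3 := hpt k
    rw [hcolf ⟨(i,j), hij⟩ i, hcolf ⟨(j,k), hjk⟩ i, hcolf ⟨(i,k), hik⟩ i] at e1
    rw [hcolf ⟨(i,j), hij⟩ j, hcolf ⟨(j,k), hjk⟩ j, hcolf ⟨(i,k), hik⟩ j] at e2
    rw [hcolf ⟨(i,j), hij⟩ k, hcolf ⟨(j,k), hjk⟩ k, hcolf ⟨(i,k), hik⟩ k] at e3
    simp only [eq_self_iff_true, if_true, if_neg hij', if_neg hjk', if_neg hik',
      if_neg (Ne.symm hij'), if_neg (Ne.symm hjk'), if_neg (Ne.symm hik'),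
      mul_zero, add_zero, zero_add, mul_one] at e1 e2 e3
    -- e1 : α * aF p + γ * aF s = 0
    -- e2 : α * bF p + β * aF q = 0
    -- e3 : β * bF q + γ * bF s = 0
    have hα : α ≠ 0 := by
      intro h0
      apply hnt h0
      · rw [h0] at e2
        have h2 : β * aF ⟨(j,k), hjk⟩ = 0 := by linear_combination e2
        exact (mul_eq_zero.1 h2).resolve_right (haF _)
      · rw [h0] at e1
        have h1 : γ * aF ⟨(i,k), hik⟩ = 0 := by linear_combination e1
        exact (mul_eq_zero.1 h1).resolve_right (haF _)
    have hE : α * (bF ⟨(i,j), hij⟩ * bF ⟨(j,k), hjk⟩ * aF ⟨(i,k), hik⟩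
        + aF ⟨(i,j), hij⟩ * bF ⟨(i,k), hik⟩ * aF ⟨(j,k), hjk⟩) = 0 := by
      linear_combination (bF ⟨(j,k), hjk⟩ * aF ⟨(i,k), hik⟩) * e2
        - (aF ⟨(j,k), hjk⟩ * aF ⟨(i,k), hik⟩) * e3
        + (bF ⟨(i,k), hik⟩ * aF ⟨(j,k), hjk⟩) * e1
    have hE' := (mul_eq_zero.1 hE).resolve_left hα
    show bF ⟨(i,k), hik⟩ / aF ⟨(i,k), hik⟩ =
      -((bF ⟨(i,j), hij⟩ / aF ⟨(i,j), hij⟩) * (bF ⟨(j,k), hjk⟩ / aF ⟨(j,k), hjk⟩))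
    field_simp [haF ⟨(i,j), hij⟩, haF ⟨(j,k), hjk⟩, haF ⟨(i,k), hik⟩]
    first
      | linear_combination hE'
      | linear_combination -hE'
      | linear_combination aF ⟨(i,k), hik⟩ * hE'
      | linear_combination -(aF ⟨(i,k), hik⟩) * hE'
  -- the row scaling
  have hz : 0 < r := by omega
  set z : Fin r := ⟨0, hz⟩ with hzdef
  set d : Fin r → F := fun i =>
    if h : z < i then -(bF ⟨(z, i), h⟩ / aF ⟨(z, i), h⟩)⁻¹ else 1 with hd
  have hd0 : ∀ i, d i ≠ 0 := by
    intro i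
    rw [hd]
    dsimp only
    split_ifs with h
    · exact neg_ne_zero.2 (inv_ne_zero (hlam0 _))
    · exact one_ne_zero
  have hkey : ∀ p : PairIdx r, d p.val.2 * (bF p / aF p) = - d p.val.1 := by
    rintro ⟨⟨p1, p2⟩, hp⟩
    have hzp2 : z < p2 := lt_of_le_of_lt (by simp [hzdef, Fin.le_def]) hp
    rcases eq_or_lt_of_le (show z ≤ p1 by simp [hzdef, Fin.le_def]) with h1 | h1
    · -- p1 = z
      subst h1
      show d p2 * (bF ⟨(z, p2), hp⟩ / aF ⟨(z, p2), hp⟩) = - d z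
      rw [hd]
      dsimp only
      rw [dif_neg (lt_irrefl z), dif_pos hp]
      have n1 := haF ⟨(z, p2), hp⟩
      have n2 := hbF ⟨(z, p2), hp⟩
      field_simp
    · -- z < p1
      show d p2 * (bF ⟨(p1, p2), hp⟩ / aF ⟨(p1, p2), hp⟩) = - d p1
      have ht := htri z p1 p2 h1 hp
      rw [hd]
      dsimp only
      rw [dif_pos hzp2, dif_pos h1]
      have e2 : bF ⟨(z, p2), hzp2⟩ / aF ⟨(z, p2), hzp2⟩ =
          bF ⟨(z, p2), lt_trans h1 hp⟩ / aF ⟨(z, p2), lt_trans h1 hp⟩ := rfl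
      rw [e2, ht]
      field_simp [haF ⟨(z, p1), h1⟩, hbF ⟨(z, p1), h1⟩, haF ⟨(p1, p2), hp⟩,
        hbF ⟨(p1, p2), hp⟩]
  -- assemble
  refine ⟨Matrix.diagonal d * B⁻¹,
    Sum.elim (fun j => (d j)⁻¹) (fun p => (d p.val.1 * aF p)⁻¹), ?_, ?_, ?_⟩
  · rw [Matrix.det_mul, Matrix.det_diagonal]
    exact (isUnit_iff_ne_zero.2 (Finset.prod_ne_zero_iff.2 fun i _ => hd0 i)).mul
      (Matrix.isUnit_nonsing_inv_det B hBdet)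
  · rintro (j | p)
    · exact inv_ne_zero (hd0 j)
    · exact inv_ne_zero (mul_ne_zero (hd0 _) (haF p))
  · have hEA : Matrix.diagonal d * B⁻¹ * A = Matrix.diagonal d * A' := by
      rw [Matrix.mul_assoc, ← hA']
    rw [hEA]
    ext x j
    rw [Matrix.mul_diagonal, Matrix.diagonal_mul, Matrix.map_apply]
    rcases j with k | p
    · rw [hA'1]
      simp only [Sum.elim_inl, IDmat, Matrix.of_apply, Sum.elim_inl]
      rcases eq_or_ne x k with h | h
      · rw [if_pos h, if_pos h, h]
        push_cast
        field_simp [hd0 k]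
      · rw [if_neg h, if_neg h]
        push_cast
        ring
    · obtain ⟨⟨p1, p2⟩, hp⟩ := p
      have hne : p1 ≠ p2 := ne_of_lt hp
      rw [hcolf ⟨(p1, p2), hp⟩ x]
      simp only [Sum.elim_inr, IDmat, Dmat, Matrix.of_apply, Sum.elim_inr]
      have hk := hkey ⟨(p1, p2), hp⟩
      rcases eq_or_ne x p1 with h1 | h1
      · have h2 : x ≠ p2 := by rw [h1]; exact hne
        rw [if_pos h1, if_pos h1, h1]
        push_cast
        field_simp [hd0 p1, haF ⟨(p1, p2), hp⟩]
      · rcases eq_or_ne x p2 with h2 | h2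
        · rw [if_neg h1, if_pos h2, if_neg h1, if_pos h2, h2]
          push_cast
          have hbb : d p2 * bF ⟨(p1, p2), hp⟩ = -(d p1 * aF ⟨(p1, p2), hp⟩) := by
            field_simp [haF ⟨(p1, p2), hp⟩] at hk
            linear_combination hk
          rw [hbb]
          have hnz : d p1 * aF ⟨(p1, p2), hp⟩ ≠ 0 := mul_ne_zero (hd0 p1) (haF _)
          field_simp
          rw [div_self hnz]
        · rw [if_neg h1, if_neg h2, if_neg h1, if_neg h2]
          push_cast
          ring
end
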